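/- arXiv:1108.1210 — 8 statements merged into one kernel-verified Lean document; each statement's English description precedes it below -/
import Mathlib

section
/- Let 0 ≤ q ≤ p ≤ 2 and C > 0. If the Markov generator L satisfies the p-logSob inequality with constant C, then L also satisfies the q-logSob inequality with the same constant C. -/
open Real Finset

noncomputable section

variable {Ω : Type*}

/-- Expectation `E f = ∑ ω, μ ω * f ω`. -/
def pexp [Fintype Ω] (μ : Ω → ℝ) (f : Ω → ℝ) : ℝ := ∑ ω, μ ω * f ω

/-- Dirichlet form `𝓔(f,g) = E[f · L g]`. -/
def dform [Fintype Ω] (μ : Ω → ℝ) (L : (Ω → ℝ) →ₗ[ℝ] (Ω → ℝ)) (f g : Ω → ℝ) : ℝ :=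
  pexp μ fun ω => f ω * L g ω

/-- Entropy `Ent(f) = E[f log f] − (E f) log (E f)`. -/
def entE [Fintype Ω] (μ : Ω → ℝ) (f : Ω → ℝ) : ℝ :=
  pexp μ (fun ω => f ω * Real.log (f ω)) - pexp μ f * Real.log (pexp μ f)

/-- Variance `Var(f) = E[f²] − (E f)²`. -/
def varE [Fintype Ω] (μ : Ω → ℝ) (f : Ω → ℝ) : ℝ :=
  pexp μ (fun ω => f ω ^ 2) - (pexp μ f) ^ 2

/-- The structural conditions on the Markov generator `L`: `L 1 = 0`, self-adjointness,
positive semidefiniteness, and nonnegativity of `L f` at a global maximum point of `f`. -/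
def IsGen [Fintype Ω] (μ : Ω → ℝ) (L : (Ω → ℝ) →ₗ[ℝ] (Ω → ℝ)) : Prop :=
  L (fun _ => 1) = 0 ∧
  (∀ f g, pexp μ (fun ω => f ω * L g ω) = pexp μ (fun ω => g ω * L f ω)) ∧
  (∀ f, 0 ≤ pexp μ (fun ω => f ω * L f ω)) ∧
  (∀ (f : Ω → ℝ) (ω : Ω), (∀ x, f x ≤ f ω) → 0 ≤ L f ω)

/-- The `p`-logSob inequality with constant `C` (with the conventions for `p = 0` and `p = 1`). -/
def LogSob [Fintype Ω] (μ : Ω → ℝ) (L : (Ω → ℝ) →ₗ[ℝ] (Ω → ℝ)) (p C : ℝ) : Prop :=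
  if p = 0 then
    ∀ f : Ω → ℝ, (∀ ω, 0 < f ω) →
      varE μ (fun ω => Real.log (f ω)) ≤ -(C / 2) * dform μ L f (fun ω => (f ω)⁻¹)
  else if p = 1 then
    ∀ f : Ω → ℝ, (∀ ω, 0 < f ω) →
      entE μ f ≤ C / 4 * dform μ L f (fun ω => Real.log (f ω))
  else
    ∀ f : Ω → ℝ, (∀ ω, 0 < f ω) →
      entE μ (fun ω => f ω ^ p) ≤
        C * p ^ 2 / (4 * (p - 1)) * dform μ L (fun ω => f ω ^ (p - 1)) f

/-- Markov semigroup `T t = e^{-tL}`. -/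
def heat [Fintype Ω] (L : (Ω → ℝ) →ₗ[ℝ] (Ω → ℝ)) (t : ℝ) (f : Ω → ℝ) : Ω → ℝ :=
  NormedSpace.exp ((-t) • (LinearMap.toContinuousLinearMap L)) f

/-- `‖f‖_p` for positive `f` and arbitrary real `p`, with `‖f‖_0 = exp (E log f)`. -/
def pnorm [Fintype Ω] (μ : Ω → ℝ) (p : ℝ) (f : Ω → ℝ) : ℝ :=
  if p = 0 then Real.exp (pexp μ fun ω => Real.log (f ω))
  else (pexp μ fun ω => f ω ^ p) ^ (1 / p)

/-- `‖f‖_p = (E |f|^p)^{1/p}` for real-valued `f`. -/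
def pnormAbs [Fintype Ω] (μ : Ω → ℝ) (p : ℝ) (f : Ω → ℝ) : ℝ :=
  (pexp μ fun ω => |f ω| ^ p) ^ (1 / p)

/-- Hölder conjugate `p' = p/(p-1)`, with the convention `0' = 0`. -/
def hconj (p : ℝ) : ℝ := if p = 0 then 0 else p / (p - 1)

/-- The simple generator `L = Id − E`. -/
def simpleL [Fintype Ω] (μ : Ω → ℝ) : (Ω → ℝ) →ₗ[ℝ] (Ω → ℝ) where
  toFun f := fun ω => f ω - pexp μ f
  map_add' f g := by
    funext ω
    simp only [Pi.add_apply, pexp, mul_add, Finset.sum_add_distrib]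
    ring
  map_smul' c f := by
    funext ω
    simp only [Pi.smul_apply, smul_eq_mul, pexp, RingHom.id_apply]
    rw [mul_sub, Finset.mul_sum]
    congr 1
    exact Finset.sum_congr rfl fun x _ => by ring

/-! In the variable `h = f ^ p` (`p > 0`), the `p`-logSob inequality reads
`Ent h ≤ (C/4) · ½ ∑ₓ ∑ᵧ μ(x) k(x,y) Φ_p(h x, h y)` with nonnegative jump rates `k(x,y)`,
`x ≠ y`, and `Φ_p(A, B) = α(1/p) α(1 - 1/p)`, `α(s) = (A^s - B^s)/s`. Writing `α(s) α(1 - s)` as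
the double integral of `x^(s-1) y^(-s)` over `[B, A]²` and symmetrizing, the integrand becomes a
`cosh` of `(s - 1/2) log (x/y)`, so `α(s) α(1 - s)` increases for `s ≥ 1/2`; hence `Φ_p` decreases
in `p ∈ (0, 2]`, which proves the claim for `q > 0`. The case `q = 0` follows by letting
`q → 0⁺`, since `Ent(f^q) = q² Var(log f) / 2 + o(q²)`. -/

open intervalIntegral in
/-- `(a ^ r - b ^ r) / r`, continued by `log a - log b` at `r = 0`. -/
def rpowDiff (a b r : ℝ) : ℝ := ∫ x in b..a, x ^ (r - 1)

section rpowDiff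

open intervalIntegral

variable {a b : ℝ}

lemma rpowDiff_swap (a b r : ℝ) : rpowDiff b a r = -rpowDiff a b r :=
  integral_symm _ _

lemma rpowDiff_self (a r : ℝ) : rpowDiff a a r = 0 :=
  integral_same

lemma rpowDiff_eq_div (ha : 0 < a) (hb : 0 < b) {r : ℝ} (hr : r ≠ 0) :
    rpowDiff a b r = (a ^ r - b ^ r) / r := by
  rw [rpowDiff, integral_rpow (Or.inr ⟨by contrapose! hr; linarith,
    Set.notMem_uIcc_of_lt hb ha⟩), sub_add_cancel]

lemma rpowDiff_zero (ha : 0 < a) (hb : 0 < b) : rpowDiff a b 0 = log a - log b := by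
  rw [rpowDiff, zero_sub, ← log_div ha.ne' hb.ne', ← integral_inv (Set.notMem_uIcc_of_lt hb ha)]
  exact integral_congr fun x _ => by simp [Real.rpow_neg_one]

lemma intervalIntegrable_rpow_of_pos (ha : 0 < a) (hb : 0 < b) (r : ℝ) :
    IntervalIntegrable (fun x : ℝ => x ^ r) MeasureTheory.volume b a :=
  intervalIntegrable_rpow (Or.inr (Set.notMem_uIcc_of_lt hb ha))

/-- The sum is `2 (xy)^(-1/2) cosh ((s - 1/2) log (x/y))`. -/
lemma rpow_mul_rpow_add_rpow_mul_rpow_le {x y : ℝ} (hx : 0 < x) (hy : 0 < y) {s t : ℝ}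
    (hs : 1 / 2 ≤ s) (hst : s ≤ t) :
    x ^ (s - 1) * y ^ (-s) + x ^ (-s) * y ^ (s - 1)
      ≤ x ^ (t - 1) * y ^ (-t) + x ^ (-t) * y ^ (t - 1) := by
  have hcosh : ∀ r : ℝ, x ^ (r - 1) * y ^ (-r) + x ^ (-r) * y ^ (r - 1)
      = 2 * exp (-(log x + log y) / 2) * cosh ((r - 1 / 2) * (log x - log y)) := by
    intro r
    simp only [rpow_def_of_pos hx, rpow_def_of_pos hy, ← exp_add, cosh_eq]
    ring_nf
    simp only [← exp_add]
    ring_nf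
  rw [hcosh s, hcosh t]
  gcongr
  rw [cosh_le_cosh, abs_mul, abs_mul, abs_of_nonneg (by linarith : (0:ℝ) ≤ s - 1 / 2),
    abs_of_nonneg (by linarith : (0:ℝ) ≤ t - 1 / 2)]
  gcongr

lemma rpowDiff_one_sub (a b r : ℝ) : rpowDiff a b (1 - r) = ∫ x in b..a, x ^ (-r) := by
  rw [rpowDiff, sub_sub_cancel_left]

lemma rpowDiff_mul_rpowDiff_one_sub_le_of_le (ha : 0 < a) (hb : 0 < b) (hba : b ≤ a)
    {s t : ℝ} (hs : 1 / 2 ≤ s) (hst : s ≤ t) :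
    rpowDiff a b s * rpowDiff a b (1 - s) ≤ rpowDiff a b t * rpowDiff a b (1 - t) := by
  have hint := intervalIntegrable_rpow_of_pos ha hb
  have inner : ∀ r x : ℝ, ∫ y in b..a, (x ^ (r - 1) * y ^ (-r) + x ^ (-r) * y ^ (r - 1))
      = x ^ (r - 1) * rpowDiff a b (1 - r) + x ^ (-r) * rpowDiff a b r := by
    intro r x
    rw [integral_add ((hint _).const_mul _) ((hint _).const_mul _), integral_const_mul,
      integral_const_mul, rpowDiff_one_sub, rpowDiff]
  have outer : ∀ r : ℝ,
      ∫ x in b..a, (x ^ (r - 1) * rpowDiff a b (1 - r) + x ^ (-r) * rpowDiff a b r)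
        = 2 * (rpowDiff a b r * rpowDiff a b (1 - r)) := by
    intro r
    rw [integral_add ((hint _).mul_const _) ((hint _).mul_const _), integral_mul_const,
      integral_mul_const, ← rpowDiff, ← rpowDiff_one_sub]
    ring
  have hle : ∫ x in b..a, (x ^ (s - 1) * rpowDiff a b (1 - s) + x ^ (-s) * rpowDiff a b s)
      ≤ ∫ x in b..a, (x ^ (t - 1) * rpowDiff a b (1 - t) + x ^ (-t) * rpowDiff a b t) := by
    refine integral_mono_on hba (((hint _).mul_const _).add ((hint _).mul_const _))
      (((hint _).mul_const _).add ((hint _).mul_const _)) fun x hx => ?_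
    rw [← inner, ← inner]
    refine integral_mono_on hba (((hint _).const_mul _).add ((hint _).const_mul _))
      (((hint _).const_mul _).add ((hint _).const_mul _)) fun y hy => ?_
    exact rpow_mul_rpow_add_rpow_mul_rpow_le (hb.trans_le hx.1) (hb.trans_le hy.1) hs hst
  rw [outer, outer] at hle
  linarith

lemma rpowDiff_mul_rpowDiff_one_sub_le (ha : 0 < a) (hb : 0 < b) {s t : ℝ}
    (hs : 1 / 2 ≤ s) (hst : s ≤ t) :
    rpowDiff a b s * rpowDiff a b (1 - s) ≤ rpowDiff a b t * rpowDiff a b (1 - t) := by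
  rcases le_total b a with hba | hab
  · exact rpowDiff_mul_rpowDiff_one_sub_le_of_le ha hb hba hs hst
  · simpa only [rpowDiff_swap b a, neg_mul_neg] using
      rpowDiff_mul_rpowDiff_one_sub_le_of_le hb ha hab hs hst

end rpowDiff

/-- The two-point integrand of the `r`-logSob inequality in the variable `h = f ^ r`. -/
def logSobPair (r A B : ℝ) : ℝ := rpowDiff A B (1 / r) * rpowDiff A B (1 - 1 / r)

section logSobPair

variable {A B : ℝ}

lemma logSobPair_self (r A : ℝ) : logSobPair r A A = 0 := by
  rw [logSobPair, rpowDiff_self, zero_mul]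

lemma logSobPair_anti (hA : 0 < A) (hB : 0 < B) {p q : ℝ} (hq : 0 < q) (hqp : q ≤ p)
    (hp2 : p ≤ 2) : logSobPair p A B ≤ logSobPair q A B :=
  rpowDiff_mul_rpowDiff_one_sub_le hA hB
    (by rw [div_le_div_iff₀ two_pos (hq.trans_le hqp)]; linarith)
    (one_div_le_one_div_of_le hq hqp)

lemma logSobPair_one (hA : 0 < A) (hB : 0 < B) :
    logSobPair 1 A B = (A - B) * (log A - log B) := by
  rw [logSobPair, div_one, sub_self, rpowDiff_eq_div hA hB one_ne_zero, rpowDiff_zero hA hB,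
    rpow_one, rpow_one, div_one]

lemma logSobPair_rpow (hA : 0 < A) (hB : 0 < B) {r : ℝ} (hr0 : r ≠ 0) (hr1 : r ≠ 1) :
    logSobPair r (A ^ r) (B ^ r) = r ^ 2 / (r - 1) * ((A ^ (r - 1) - B ^ (r - 1)) * (A - B)) := by
  have hr1' : r - 1 ≠ 0 := sub_ne_zero.mpr hr1
  have hr1'' : 1 - 1 / r ≠ 0 := by
    rw [one_sub_div hr0]
    exact div_ne_zero hr1' hr0
  have hpow : ∀ {X : ℝ}, 0 < X → ∀ e : ℝ, (X ^ r) ^ e = X ^ (r * e) := fun hX e =>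
    (rpow_mul hX.le r e).symm
  rw [logSobPair, rpowDiff_eq_div (by positivity) (by positivity) (one_div_ne_zero hr0),
    rpowDiff_eq_div (by positivity) (by positivity) hr1'',
    hpow hA, hpow hA, hpow hB, hpow hB, mul_one_div_cancel hr0, rpow_one, rpow_one,
    show r * (1 - 1 / r) = r - 1 by field_simp]
  field_simp

end logSobPair

lemma sum_sum_mul_sub_mul_sub [Fintype Ω] {w : Ω → Ω → ℝ} (hsymm : ∀ x y, w x y = w y x)
    (hrow : ∀ x, ∑ y, w x y = 0) (F G : Ω → ℝ) :
    ∑ x, ∑ y, w x y * ((F x - F y) * (G x - G y)) = -2 * ∑ x, ∑ y, w x y * (F x * G y) := by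
  have hflip : ∀ K : Ω → Ω → ℝ, ∑ x, ∑ y, w x y * K y x = ∑ x, ∑ y, w x y * K x y := by
    intro K
    rw [Finset.sum_comm]
    simp only [hsymm]
  have hdiag : ∑ x, ∑ y, w x y * (F x * G x) = 0 :=
    Finset.sum_eq_zero fun x _ => by rw [← Finset.sum_mul, hrow, zero_mul]
  have hdiag' : ∑ x, ∑ y, w x y * (F y * G y) = 0 := by
    rw [hflip fun a _ => F a * G a, hdiag]
  have hcross := hflip fun a b => F a * G b
  simp only [mul_sub, sub_mul, Finset.sum_sub_distrib]
  rw [hdiag, hdiag', hcross]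
  ring

section jumpRate

variable [Fintype Ω] [DecidableEq Ω] {μ : Ω → ℝ} {L : (Ω → ℝ) →ₗ[ℝ] (Ω → ℝ)}

/-- Off the diagonal, the rate at which the chain generated by `-L` jumps from `x` to `y`. -/
def jumpRate (L : (Ω → ℝ) →ₗ[ℝ] (Ω → ℝ)) (x y : Ω) : ℝ :=
  -L (fun z => if y = z then 1 else 0) x

def jumpSum (μ : Ω → ℝ) (L : (Ω → ℝ) →ₗ[ℝ] (Ω → ℝ)) (Ψ : Ω → Ω → ℝ) : ℝ :=
  (1 / 2) * ∑ x, ∑ y, μ x * jumpRate L x y * Ψ x y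

lemma jumpSum_const_mul (c : ℝ) (Ψ : Ω → Ω → ℝ) :
    jumpSum μ L (fun x y => c * Ψ x y) = c * jumpSum μ L Ψ := by
  simp only [jumpSum, Finset.mul_sum]
  exact Finset.sum_congr rfl fun x _ => Finset.sum_congr rfl fun y _ => by ring

lemma apply_eq_neg_sum_jumpRate (L : (Ω → ℝ) →ₗ[ℝ] (Ω → ℝ)) (f : Ω → ℝ) (x : Ω) :
    L f x = -∑ y, jumpRate L x y * f y := by
  rw [L.pi_apply_eq_sum_univ f, Finset.sum_apply, ← Finset.sum_neg_distrib]
  simp [jumpRate, mul_comm]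

lemma sum_jumpRate (hL : IsGen μ L) (x : Ω) : ∑ y, jumpRate L x y = 0 := by
  have h := apply_eq_neg_sum_jumpRate L (fun _ => 1) x
  rw [hL.1] at h
  simpa using h.symm

lemma jumpRate_nonneg (hL : IsGen μ L) {x y : Ω} (hxy : x ≠ y) : 0 ≤ jumpRate L x y := by
  have hmax := hL.2.2.2 (-fun z => if y = z then 1 else 0) x fun z => by
    simp only [Pi.neg_apply, if_neg hxy.symm]
    split_ifs <;> norm_num
  rwa [map_neg] at hmax

lemma mul_jumpRate_comm (hL : IsGen μ L) (x y : Ω) :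
    μ x * jumpRate L x y = μ y * jumpRate L y x := by
  have h := hL.2.1 (fun z => if x = z then 1 else 0) (fun z => if y = z then 1 else 0)
  simp only [pexp, ite_mul, one_mul, zero_mul, mul_ite, mul_zero, Finset.sum_ite_eq,
    Finset.mem_univ, if_true] at h
  rw [jumpRate, jumpRate, mul_neg, mul_neg, h]

lemma dform_eq_jumpSum (hL : IsGen μ L) (F G : Ω → ℝ) :
    dform μ L F G = jumpSum μ L fun x y => (F x - F y) * (G x - G y) := by
  have hrep : dform μ L F G = -∑ x, ∑ y, μ x * jumpRate L x y * (F x * G y) := by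
    simp only [dform, pexp, apply_eq_neg_sum_jumpRate L G, Finset.mul_sum, ← Finset.sum_neg_distrib,
      mul_neg]
    exact Finset.sum_congr rfl fun x _ => Finset.sum_congr rfl fun y _ => by ring
  rw [hrep, jumpSum, sum_sum_mul_sub_mul_sub (mul_jumpRate_comm hL)
    (fun x => by rw [← Finset.mul_sum, sum_jumpRate hL, mul_zero])]
  ring

lemma jumpSum_mono (hμ : ∀ ω, 0 < μ ω) (hL : IsGen μ L) {Ψ Ψ' : Ω → Ω → ℝ}
    (hdiag : ∀ x, Ψ x x = Ψ' x x) (hle : ∀ x y, x ≠ y → Ψ x y ≤ Ψ' x y) :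
    jumpSum μ L Ψ ≤ jumpSum μ L Ψ' := by
  unfold jumpSum
  gcongr 1 / 2 * ?_
  refine Finset.sum_le_sum fun x _ => Finset.sum_le_sum fun y _ => ?_
  rcases eq_or_ne x y with rfl | hxy
  · rw [hdiag]
  · exact mul_le_mul_of_nonneg_left (hle x y hxy)
      (mul_nonneg (hμ x).le (jumpRate_nonneg hL hxy))

end jumpRate

lemma forall_pos_rpow_iff {r : ℝ} (hr : r ≠ 0) {P : (Ω → ℝ) → Prop} :
    (∀ f : Ω → ℝ, (∀ ω, 0 < f ω) → P fun ω => f ω ^ r) ↔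
      ∀ h : Ω → ℝ, (∀ ω, 0 < h ω) → P h := by
  refine ⟨fun H h hh => ?_, fun H f hf => H _ fun ω => rpow_pos_of_pos (hf ω) r⟩
  simpa only [rpow_inv_rpow (hh _).le hr] using H (fun ω => h ω ^ r⁻¹) fun ω => by
    have := hh ω
    positivity

section LogSob

variable [Fintype Ω] [DecidableEq Ω] {μ : Ω → ℝ} {L : (Ω → ℝ) →ₗ[ℝ] (Ω → ℝ)}

lemma logSob_iff_entE_le_jumpSum (hL : IsGen μ L) {r C : ℝ} (hr : 0 < r) :
    LogSob μ L r C ↔ ∀ h : Ω → ℝ, (∀ ω, 0 < h ω) →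
      entE μ h ≤ C / 4 * jumpSum μ L fun x y => logSobPair r (h x) (h y) := by
  rw [LogSob, if_neg hr.ne']
  split_ifs with hr1
  · subst hr1
    refine forall₂_congr fun f hf => ?_
    have hpair : (fun x y => logSobPair 1 (f x) (f y))
        = fun x y => (f x - f y) * (log (f x) - log (f y)) := by
      funext x y
      exact logSobPair_one (hf x) (hf y)
    rw [hpair, dform_eq_jumpSum hL]
  · refine Iff.trans ?_ (forall_pos_rpow_iff hr.ne')
    refine forall₂_congr fun f hf => ?_
    have hpair : (fun x y => logSobPair r (f x ^ r) (f y ^ r))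
        = fun x y => r ^ 2 / (r - 1) * ((f x ^ (r - 1) - f y ^ (r - 1)) * (f x - f y)) := by
      funext x y
      exact logSobPair_rpow (hf x) (hf y) hr.ne' hr1
    rw [hpair, jumpSum_const_mul, ← dform_eq_jumpSum hL, ← mul_assoc,
      div_mul_div_comm]

lemma logSob_anti_of_pos (hμ : ∀ ω, 0 < μ ω) (hL : IsGen μ L) {p q C : ℝ} (hC : 0 ≤ C)
    (hq : 0 < q) (hqp : q ≤ p) (hp2 : p ≤ 2) (h : LogSob μ L p C) : LogSob μ L q C := by
  rw [logSob_iff_entE_le_jumpSum hL (hq.trans_le hqp)] at h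
  rw [logSob_iff_entE_le_jumpSum hL hq]
  intro f hf
  calc entE μ f ≤ C / 4 * jumpSum μ L fun x y => logSobPair p (f x) (f y) := h f hf
    _ ≤ C / 4 * jumpSum μ L fun x y => logSobPair q (f x) (f y) := by
      gcongr C / 4 * ?_
      exact jumpSum_mono hμ hL (fun x => by rw [logSobPair_self, logSobPair_self])
        fun x y _ => logSobPair_anti (hf x) (hf y) hq hqp hp2

end LogSob

section entropyLimit

open Filter Topology

variable [Fintype Ω] {μ : Ω → ℝ}

def expMoment (μ g u : Ω → ℝ) (q : ℝ) : ℝ := pexp μ fun ω => u ω * exp (g ω * q)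

lemma hasDerivAt_expMoment (μ g u : Ω → ℝ) (q : ℝ) :
    HasDerivAt (expMoment μ g u) (expMoment μ g (u * g) q) q := by
  have hω : ∀ ω, HasDerivAt (fun q => μ ω * (u ω * exp (g ω * q)))
      (μ ω * (u ω * g ω * exp (g ω * q))) q := fun ω =>
    ((((hasDerivAt_id' q).const_mul (g ω)).exp.const_mul (u ω)).const_mul (μ ω)).congr_deriv
      (by ring)
  exact HasDerivAt.fun_sum fun ω _ => hω ω

lemma expMoment_one_pos (hμ : ∀ ω, 0 < μ ω) (hμ1 : ∑ ω, μ ω = 1) (g : Ω → ℝ) (q : ℝ) :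
    0 < expMoment μ g 1 q :=
  Finset.sum_pos (fun ω _ => mul_pos (hμ ω) (mul_pos one_pos (exp_pos _)))
    (Finset.nonempty_of_sum_ne_zero (hμ1 ▸ one_ne_zero))

lemma expMoment_one_zero (hμ1 : ∑ ω, μ ω = 1) (g : Ω → ℝ) : expMoment μ g 1 0 = 1 := by
  simpa [expMoment, pexp] using hμ1

lemma entE_exp_mul (μ g : Ω → ℝ) (q : ℝ) :
    entE μ (fun ω => exp (g ω * q))
      = q * expMoment μ g g q - expMoment μ g 1 q * log (expMoment μ g 1 q) := by
  simp only [entE, expMoment, pexp, log_exp, Pi.one_apply, one_mul, Finset.mul_sum]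
  congr 1
  exact Finset.sum_congr rfl fun ω _ => by ring

lemma varE_eq_expMoment (μ g : Ω → ℝ) :
    varE μ g = expMoment μ g (g * g) 0 - expMoment μ g g 0 * expMoment μ g g 0 := by
  simp [varE, expMoment, pexp, sq]

lemma hasDerivAt_entE_exp_mul (hμ : ∀ ω, 0 < μ ω) (hμ1 : ∑ ω, μ ω = 1) (g : Ω → ℝ) (q : ℝ) :
    HasDerivAt (fun q => entE μ (fun ω => exp (g ω * q)))
      (q * expMoment μ g (g * g) q - expMoment μ g g q * log (expMoment μ g 1 q)) q := by
  set M := expMoment μ g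
  have hMq : M 1 q ≠ 0 := (expMoment_one_pos hμ hμ1 g q).ne'
  have hM := hasDerivAt_expMoment μ g
  have h : HasDerivAt (fun q => q * M g q - M 1 q * log (M 1 q)) (1 * M g q + q * M (g * g) q
      - (M (1 * g) q * log (M 1 q) + M 1 q * (M (1 * g) q / M 1 q))) q :=
    ((hasDerivAt_id q).mul (hM g q)).sub ((hM 1 q).mul ((hM 1 q).log hMq))
  simp only [entE_exp_mul]
  refine h.congr_deriv ?_
  simp only [one_mul]
  field_simp
  ring

lemma tendsto_entE_exp_mul_div_sq (hμ : ∀ ω, 0 < μ ω) (hμ1 : ∑ ω, μ ω = 1) (g : Ω → ℝ) :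
    Tendsto (fun q => entE μ (fun ω => exp (g ω * q)) / q ^ 2) (𝓝[>] 0)
      (𝓝 (varE μ g / 2)) := by
  have hM := hasDerivAt_expMoment μ g
  have hM0 := expMoment_one_zero hμ1 g
  have hH := hasDerivAt_entE_exp_mul hμ hμ1 g
  have hlogM : Tendsto (fun q => log (expMoment μ g 1 q) / q) (𝓝[>] 0)
      (𝓝 (expMoment μ g g 0)) := by
    have := hasDerivAt_iff_tendsto_slope.mp ((hM 1 0).log (expMoment_one_pos hμ hμ1 g 0).ne')
    rw [hM0, div_one, one_mul] at this
    refine (this.mono_left (nhdsWithin_mono 0 fun q hq => ne_of_gt hq)).congr fun q => ?_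
    simp [slope_def_field, hM0]
  refine HasDerivAt.lhopital_zero_nhdsGT (Eventually.of_forall hH)
    (Eventually.of_forall fun q => by simpa using hasDerivAt_pow 2 q) ?_ ?_ ?_ ?_
  · filter_upwards [self_mem_nhdsWithin] with q (hq : 0 < q)
    positivity
  · simpa [entE, pexp, hμ1] using ((hH 0).continuousAt.tendsto).mono_left nhdsWithin_le_nhds
  · simpa using ((continuous_pow 2).tendsto (0 : ℝ)).mono_left nhdsWithin_le_nhds
  · rw [varE_eq_expMoment]
    have hlim := ((((hM (g * g) 0).continuousAt.tendsto).mono_left nhdsWithin_le_nhds).sub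
      ((((hM g 0).continuousAt.tendsto).mono_left nhdsWithin_le_nhds).mul hlogM)).div_const 2
    refine hlim.congr' ?_
    filter_upwards [self_mem_nhdsWithin] with q (hq : 0 < q)
    field_simp

end entropyLimit

open Filter Topology in
lemma logSob_zero_of_pos [Fintype Ω] [DecidableEq Ω] {μ : Ω → ℝ}
    {L : (Ω → ℝ) →ₗ[ℝ] (Ω → ℝ)} (hμ : ∀ ω, 0 < μ ω) (hμ1 : ∑ ω, μ ω = 1) (hL : IsGen μ L)
    {p C : ℝ} (hC : 0 ≤ C) (hp : 0 < p) (hp2 : p ≤ 2) (h : LogSob μ L p C) :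
    LogSob μ L 0 C := by
  rw [LogSob, if_pos rfl]
  intro f hf
  have hrpow : ∀ q, (fun ω => f ω ^ q) = fun ω => exp (log (f ω) * q) := fun q =>
    funext fun ω => rpow_def_of_pos (hf ω) q
  have hrhs : Tendsto (fun q => C / (4 * (q - 1)) * dform μ L (fun ω => f ω ^ (q - 1)) f)
      (𝓝[>] 0) (𝓝 (-(C / 4) * dform μ L (fun ω => (f ω)⁻¹) f)) := by
    have hD : Continuous fun q : ℝ => dform μ L (fun ω => f ω ^ (q - 1)) f := by
      simp only [dform, pexp]
      fun_prop (disch := exact (hf _).ne')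
    have hcont : ContinuousAt
        (fun q => C / (4 * (q - 1)) * dform μ L (fun ω => f ω ^ (q - 1)) f) 0 :=
      (continuousAt_const.div (by fun_prop) (by norm_num)).mul hD.continuousAt
    convert hcont.tendsto.mono_left nhdsWithin_le_nhds using 2
    simp only [zero_sub, rpow_neg_one]
    ring
  have hev : ∀ᶠ q in 𝓝[>] 0, entE μ (fun ω => exp (log (f ω) * q)) / q ^ 2
      ≤ C / (4 * (q - 1)) * dform μ L (fun ω => f ω ^ (q - 1)) f := by
    filter_upwards [Ioo_mem_nhdsGT (lt_min hp one_pos)] with q ⟨hq0, hq⟩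
    have hLq := logSob_anti_of_pos hμ hL hC hq0 (hq.trans_le (min_le_left _ _)).le hp2 h
    rw [LogSob, if_neg hq0.ne', if_neg (hq.trans_le (min_le_right _ _)).ne] at hLq
    rw [← hrpow, div_le_iff₀ (by positivity)]
    calc _ ≤ _ := hLq f hf
      _ = _ := by ring
  have hsymm : dform μ L f (fun ω => (f ω)⁻¹) = dform μ L (fun ω => (f ω)⁻¹) f := hL.2.1 _ _
  have hlim := le_of_tendsto_of_tendsto
    (tendsto_entE_exp_mul_div_sq hμ hμ1 fun ω => log (f ω)) hrhs hev
  rw [hsymm]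
  linarith

/-- monotonicity of the `p`-logSob inequalities on `[0,2]`. -/
theorem logSob_monotone [Fintype Ω] (μ : Ω → ℝ)
    (hμpos : ∀ ω, 0 < μ ω) (hμ1 : ∑ ω, μ ω = 1)
    (L : (Ω → ℝ) →ₗ[ℝ] (Ω → ℝ)) (hL : IsGen μ L)
    (p q C : ℝ) (hC : 0 < C) (hq0 : 0 ≤ q) (hqp : q ≤ p) (hp2 : p ≤ 2)
    (h : LogSob μ L p C) : LogSob μ L q C := by
  classical
  rcases hq0.eq_or_lt with rfl | hq
  · rcases hqp.eq_or_lt with rfl | hp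
    · exact h
    · exact logSob_zero_of_pos hμpos hμ1 hL hC.le hp hp2 h
  · exact logSob_anti_of_pos hμpos hL hC.le hq hqp hp2 h

end
end

section
/- Let I be a non-empty convex subset of ℝ and let φ₁, φ₂, ψ₁, ψ₂ : I → ℝ satisfy (φ₁(a)−φ₁(b))(φ₂(a)−φ₂(b)) ≤ (ψ₁(a)−ψ₁(b))(ψ₂(a)−ψ₂(b)) for all a, b ∈ I. Then for every f : Ω → I one has 𝓔(φ₁∘f, φ₂∘f) ≤ 𝓔(ψ₁∘f, ψ₂∘f). -/
open Real Finset

noncomputable section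

variable {Ω : Type*}

/-! Write `L` as a matrix `K`. Since `K` has zero row sums (`L 1 = 0`) and `μ a K a b = μ b K b a`
(self-adjointness), the Dirichlet form is `-½ ∑ₐ ∑_b μ a K a b (g b - g a)(h b - h a)`; the maximum
principle makes the off-diagonal entries of `K` nonpositive, so this is a sum of the products
`(g b - g a)(h b - h a)` with nonnegative weights and the comparison holds term by term. -/

section Kernel

variable [Fintype Ω] [DecidableEq Ω] {μ : Ω → ℝ} {L : (Ω → ℝ) →ₗ[ℝ] (Ω → ℝ)}

local notation "K" => LinearMap.toMatrix' L

lemma apply_eq_sum_toMatrix' (g : Ω → ℝ) (a : Ω) : L g a = ∑ b, K a b * g b := by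
  rw [← LinearMap.toMatrix'_mulVec]
  rfl

lemma sum_toMatrix'_eq_zero (hL1 : L (fun _ => 1) = 0) (a : Ω) : ∑ b, K a b = 0 := by
  simpa [hL1] using (apply_eq_sum_toMatrix' (L := L) (fun _ => 1) a).symm

lemma pexp_single_mul (a : Ω) (g : Ω → ℝ) :
    pexp μ (fun ω => (Pi.single a 1 : Ω → ℝ) ω * g ω) = μ a * g a := by
  simp [pexp, Pi.single_apply]

lemma mul_toMatrix'_comm
    (hsym : ∀ f g, pexp μ (fun ω => f ω * L g ω) = pexp μ (fun ω => g ω * L f ω)) (a b : Ω) :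
    μ a * K a b = μ b * K b a := by
  simpa only [pexp_single_mul, LinearMap.toMatrix'_apply] using hsym (Pi.single a 1) (Pi.single b 1)

lemma toMatrix'_nonpos_of_ne (hmax : ∀ (f : Ω → ℝ) (ω : Ω), (∀ x, f x ≤ f ω) → 0 ≤ L f ω)
    {a b : Ω} (hab : a ≠ b) : K a b ≤ 0 := by
  have hle : ∀ x, (-Pi.single b 1 : Ω → ℝ) x ≤ (-Pi.single b 1 : Ω → ℝ) a := by
    intro x
    by_cases hx : x = b <;> simp [hx, Pi.single_eq_of_ne hab]
  have := hmax (-Pi.single b 1) a hle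
  rw [map_neg] at this
  simpa [LinearMap.toMatrix'_apply] using this

lemma dform_eq_neg_half_sum (hL1 : L (fun _ => 1) = 0)
    (hsym : ∀ f g, pexp μ (fun ω => f ω * L g ω) = pexp μ (fun ω => g ω * L f ω))
    (g h : Ω → ℝ) :
    dform μ L g h = -(1 / 2) * ∑ a, ∑ b, μ a * K a b * ((g b - g a) * (h b - h a)) := by
  have hfwd : dform μ L g h = ∑ a, ∑ b, μ a * K a b * (g a * (h b - h a)) := by
    refine sum_congr rfl fun a _ => ?_
    have hrow : ∑ b, μ a * K a b * (g a * h a) = 0 := by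
      rw [← sum_mul, ← mul_sum, sum_toMatrix'_eq_zero hL1, mul_zero, zero_mul]
    show μ a * (g a * L h a) = _
    rw [apply_eq_sum_toMatrix', mul_sum, mul_sum]
    simp only [mul_sub, sum_sub_distrib, hrow, sub_zero]
    exact sum_congr rfl fun b _ => by ring
  have hbwd : dform μ L g h = ∑ a, ∑ b, μ a * K a b * (g b * (h a - h b)) := by
    rw [hfwd, sum_comm]
    exact sum_congr rfl fun b _ => sum_congr rfl fun a _ => by rw [mul_toMatrix'_comm hsym]
  have hsum : ∑ a, ∑ b, μ a * K a b * ((g b - g a) * (h b - h a)) =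
      -(∑ a, ∑ b, μ a * K a b * (g a * (h b - h a)) +
        ∑ a, ∑ b, μ a * K a b * (g b * (h a - h b))) := by
    simp only [← sum_add_distrib, ← sum_neg_distrib]
    exact sum_congr rfl fun a _ => sum_congr rfl fun b _ => by ring
  rw [hsum, ← hfwd, ← hbwd]
  ring

end Kernel

lemma dform_le_dform [Fintype Ω] {μ : Ω → ℝ} (hμ : ∀ ω, 0 ≤ μ ω)
    {L : (Ω → ℝ) →ₗ[ℝ] (Ω → ℝ)} (hL : IsGen μ L) {g₁ g₂ h₁ h₂ : Ω → ℝ}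
    (h : ∀ a b, (g₁ a - g₁ b) * (g₂ a - g₂ b) ≤ (h₁ a - h₁ b) * (h₂ a - h₂ b)) :
    dform μ L g₁ g₂ ≤ dform μ L h₁ h₂ := by
  classical
  obtain ⟨hL1, hsym, -, hmax⟩ := hL
  rw [dform_eq_neg_half_sum hL1 hsym, dform_eq_neg_half_sum hL1 hsym]
  refine mul_le_mul_of_nonpos_left (sum_le_sum fun a _ => sum_le_sum fun b _ => ?_) (by norm_num)
  rcases eq_or_ne a b with rfl | hab
  · simp
  · exact mul_le_mul_of_nonpos_left (h b a)
      (mul_nonpos_of_nonneg_of_nonpos (hμ a) (toMatrix'_nonpos_of_ne hmax hab))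

theorem dform_comparison_general [Fintype Ω] (μ : Ω → ℝ)
    (hμpos : ∀ ω, 0 < μ ω)
    (L : (Ω → ℝ) →ₗ[ℝ] (Ω → ℝ)) (hL : IsGen μ L)
    (I : Set ℝ)
    (φ₁ φ₂ ψ₁ ψ₂ : ℝ → ℝ)
    (hcmp : ∀ a ∈ I, ∀ b ∈ I,
      (φ₁ a - φ₁ b) * (φ₂ a - φ₂ b) ≤ (ψ₁ a - ψ₁ b) * (ψ₂ a - ψ₂ b))
    (f : Ω → ℝ) (hf : ∀ ω, f ω ∈ I) :
    dform μ L (fun ω => φ₁ (f ω)) (fun ω => φ₂ (f ω)) ≤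
      dform μ L (fun ω => ψ₁ (f ω)) (fun ω => ψ₂ (f ω)) :=
  dform_le_dform (fun ω => (hμpos ω).le) hL fun a b => hcmp _ (hf a) _ (hf b)

/-- comparison lemma for Dirichlet forms. -/
theorem dform_comparison [Fintype Ω] (μ : Ω → ℝ)
    (hμpos : ∀ ω, 0 < μ ω) (hμ1 : ∑ ω, μ ω = 1)
    (L : (Ω → ℝ) →ₗ[ℝ] (Ω → ℝ)) (hL : IsGen μ L)
    (I : Set ℝ) (hIconv : Convex ℝ I) (hIne : I.Nonempty)
    (φ₁ φ₂ ψ₁ ψ₂ : ℝ → ℝ)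
    (hcmp : ∀ a ∈ I, ∀ b ∈ I,
      (φ₁ a - φ₁ b) * (φ₂ a - φ₂ b) ≤ (ψ₁ a - ψ₁ b) * (ψ₂ a - ψ₂ b))
    (f : Ω → ℝ) (hf : ∀ ω, f ω ∈ I) :
    dform μ L (fun ω => φ₁ (f ω)) (fun ω => φ₂ (f ω)) ≤
      dform μ L (fun ω => ψ₁ (f ω)) (fun ω => ψ₂ (f ω)) :=
  dform_comparison_general μ hμpos L hL I φ₁ φ₂ ψ₁ ψ₂ hcmp f hf

end
end

section
/- Let I be a non-empty convex subset of ℝ and let φ₁, φ₂, ψ₁, ψ₂ : I → ℝ be differentiable functions such that φ₁'(a)φ₂'(b) + φ₁'(b)φ₂'(a) ≤ ψ₁'(a)ψ₂'(b) + ψ₁'(b)ψ₂'(a) for all a, b ∈ I. Then for every f : Ω → I one has 𝓔(φ₁∘f, φ₂∘f) ≤ 𝓔(ψ₁∘f, ψ₂∘f). -/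
open Real Finset

noncomputable section

variable {Ω : Type*}

/-!
On a finite space the Dirichlet form is a weighted sum over pairs of points,
`𝓔(u, v) = -½ ∑ₓ ∑ᵧ k(x, y) (u x - u y) (v x - v y)` with `k(x, y) = μ(x) (L δ_y)(x)`:
self-adjointness makes `k` symmetric and `L 1 = 0` makes its rows sum to zero. The maximum
principle applied to `-δ_y` gives `k(x, y) ≤ 0` for `x ≠ y`, so it suffices to compare the
increments `(φ₁ a - φ₁ b)(φ₂ a - φ₂ b) ≤ (ψ₁ a - ψ₁ b)(ψ₂ a - ψ₂ b)` pointwise. For `b ≤ a`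
this is a double monotonicity argument: both sides vanish at `a = b`, and the `a`-derivative
of their difference vanishes at `b = a` and is antitone in `b` by the hypothesis on the
derivatives.
-/

section Kernel
variable [DecidableEq Ω] {μ : Ω → ℝ} {L : (Ω → ℝ) →ₗ[ℝ] (Ω → ℝ)}

def dkernel (μ : Ω → ℝ) (L : (Ω → ℝ) →ₗ[ℝ] (Ω → ℝ)) (x y : Ω) : ℝ :=
  μ x * L (Pi.single y 1) x

theorem dkernel_nonpos {x y : Ω} (hμ : 0 ≤ μ x)
    (hmax : ∀ f : Ω → ℝ, (∀ z, f z ≤ f x) → 0 ≤ L f x) (hxy : x ≠ y) : dkernel μ L x y ≤ 0 := by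
  have h := hmax (-Pi.single y 1) fun z => by
    simp only [Pi.neg_apply, Pi.single_apply, hxy, if_false, neg_zero, Left.neg_nonpos_iff]
    split_ifs <;> norm_num
  rw [map_neg, Pi.neg_apply, neg_nonneg] at h
  exact mul_nonpos_of_nonneg_of_nonpos hμ h

variable [Fintype Ω]

theorem linearMap_apply_eq_sum_single (v : Ω → ℝ) (x : Ω) :
    L v x = ∑ y, v y * L (Pi.single y 1) x := by
  conv_lhs => rw [← Finset.univ_sum_single v]
  simp only [map_sum, Finset.sum_apply]
  refine Finset.sum_congr rfl fun y _ => ?_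
  rw [← smul_eq_mul, ← Pi.smul_apply, ← map_smul, ← Pi.single_smul', smul_eq_mul, mul_one]

theorem dform_eq_sum_dkernel (u v : Ω → ℝ) :
    dform μ L u v = ∑ x, ∑ y, dkernel μ L x y * u x * v y := by
  simp only [dform, pexp, dkernel, linearMap_apply_eq_sum_single v, Finset.mul_sum]
  exact Finset.sum_congr rfl fun x _ => Finset.sum_congr rfl fun y _ => by ring

theorem dkernel_comm (hsa : ∀ f g, dform μ L f g = dform μ L g f) (x y : Ω) :
    dkernel μ L x y = dkernel μ L y x := by
  simpa [dform_eq_sum_dkernel, Pi.single_apply] using hsa (Pi.single x 1) (Pi.single y 1)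

theorem sum_dkernel_eq_zero (h1 : L (fun _ => 1) = 0) (x : Ω) : ∑ y, dkernel μ L x y = 0 := by
  have h := congrFun h1 x
  rw [linearMap_apply_eq_sum_single] at h
  simp only [one_mul, Pi.zero_apply] at h
  simp only [dkernel]
  rw [← Finset.mul_sum, h, mul_zero]

theorem dform_eq_neg_half_sum_s3 (hL : IsGen μ L) (u v : Ω → ℝ) :
    dform μ L u v = -(∑ x, ∑ y, dkernel μ L x y * ((u x - u y) * (v x - v y))) / 2 := by
  have hrow := sum_dkernel_eq_zero (μ := μ) hL.1
  have hcomm := dkernel_comm hL.2.1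
  have hdiag : ∑ x, ∑ y, dkernel μ L x y * (u x * v x) = 0 := by
    simp [← Finset.sum_mul, hrow]
  have hdiag' : ∑ x, ∑ y, dkernel μ L x y * (u y * v y) = 0 := by
    rw [Finset.sum_comm]; simp [hcomm _ _, ← Finset.sum_mul, hrow]
  have hswap : ∑ x, ∑ y, dkernel μ L x y * (u y * v x) = dform μ L u v := by
    rw [dform_eq_sum_dkernel, Finset.sum_comm]
    exact Finset.sum_congr rfl fun x _ => Finset.sum_congr rfl fun y _ => by rw [hcomm]; ring
  have hexp : ∀ x y, dkernel μ L x y * ((u x - u y) * (v x - v y)) =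
      dkernel μ L x y * (u x * v x) + dkernel μ L x y * (u y * v y) -
        dkernel μ L x y * u x * v y - dkernel μ L x y * (u y * v x) := fun x y => by ring
  simp only [hexp, Finset.sum_add_distrib, Finset.sum_sub_distrib, hdiag, hdiag', hswap,
    ← dform_eq_sum_dkernel]
  ring

end Kernel

theorem dform_le_dform_of_forall_mul_sub_le [Fintype Ω] {μ : Ω → ℝ}
    {L : (Ω → ℝ) →ₗ[ℝ] (Ω → ℝ)} (hμ : ∀ ω, 0 ≤ μ ω) (hL : IsGen μ L) {u₁ u₂ v₁ v₂ : Ω → ℝ}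
    (h : ∀ x y, (u₁ x - u₁ y) * (u₂ x - u₂ y) ≤ (v₁ x - v₁ y) * (v₂ x - v₂ y)) :
    dform μ L u₁ u₂ ≤ dform μ L v₁ v₂ := by
  classical
  rw [dform_eq_neg_half_sum_s3 hL, dform_eq_neg_half_sum_s3 hL, div_le_div_iff_of_pos_right two_pos,
    neg_le_neg_iff]
  refine Finset.sum_le_sum fun x _ => Finset.sum_le_sum fun y _ => ?_
  rcases eq_or_ne x y with rfl | hxy
  · simp
  · exact mul_le_mul_of_nonpos_left (h x y) (dkernel_nonpos (hμ x) (hL.2.2.2 · x) hxy)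

section Increments
variable {I : Set ℝ} {φ₁ φ₂ ψ₁ ψ₂ dφ₁ dφ₂ dψ₁ dψ₂ : ℝ → ℝ}

theorem Convex.le_of_hasDerivWithinAt_nonneg {F F' : ℝ → ℝ} (hI : Convex ℝ I)
    (hF : ∀ x ∈ I, HasDerivWithinAt F (F' x) I x) {a b : ℝ} (ha : a ∈ I) (hb : b ∈ I)
    (hab : a ≤ b) (hF' : ∀ x ∈ Set.Ioo a b, 0 ≤ F' x) : F a ≤ F b := by
  have hsub : Set.Icc a b ⊆ I := hI.ordConnected.out ha hb
  refine monotoneOn_of_hasDerivWithinAt_nonneg (convex_Icc a b)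
    (fun x hx => (hF x (hsub hx)).continuousWithinAt.mono hsub) (fun x hx => ?_)
    (fun x hx => hF' x (by rwa [interior_Icc] at hx)) (Set.left_mem_Icc.2 hab)
    (Set.right_mem_Icc.2 hab) hab
  exact (hF x (hsub (interior_subset hx))).mono (interior_subset.trans hsub)

theorem deriv_mul_sub_le_of_le (hI : Convex ℝ I)
    (hφ₁ : ∀ a ∈ I, HasDerivWithinAt φ₁ (dφ₁ a) I a)
    (hφ₂ : ∀ a ∈ I, HasDerivWithinAt φ₂ (dφ₂ a) I a)
    (hψ₁ : ∀ a ∈ I, HasDerivWithinAt ψ₁ (dψ₁ a) I a)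
    (hψ₂ : ∀ a ∈ I, HasDerivWithinAt ψ₂ (dψ₂ a) I a)
    (hcmp : ∀ a ∈ I, ∀ b ∈ I,
      dφ₁ a * dφ₂ b + dφ₁ b * dφ₂ a ≤ dψ₁ a * dψ₂ b + dψ₁ b * dψ₂ a)
    {x t : ℝ} (hx : x ∈ I) (ht : t ∈ I) (htx : t ≤ x) :
    dφ₁ x * (φ₂ x - φ₂ t) + (φ₁ x - φ₁ t) * dφ₂ x ≤
      dψ₁ x * (ψ₂ x - ψ₂ t) + (ψ₁ x - ψ₁ t) * dψ₂ x := by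
  have key := hI.le_of_hasDerivWithinAt_nonneg (fun s hs =>
    ((((hφ₂ s hs).const_sub (φ₂ x)).const_mul (dφ₁ x)).add
        (((hφ₁ s hs).const_sub (φ₁ x)).mul_const (dφ₂ x))).sub
      ((((hψ₂ s hs).const_sub (ψ₂ x)).const_mul (dψ₁ x)).add
        (((hψ₁ s hs).const_sub (ψ₁ x)).mul_const (dψ₂ x)))) ht hx htx
    fun s hs => by
      linarith [hcmp x hx s (hI.ordConnected.out ht hx (Set.Ioo_subset_Icc_self hs))]
  simp only [Pi.add_apply, Pi.sub_apply, sub_self, mul_zero, zero_mul, add_zero] at key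
  linarith

theorem mul_sub_le_mul_sub (hI : Convex ℝ I)
    (hφ₁ : ∀ a ∈ I, HasDerivWithinAt φ₁ (dφ₁ a) I a)
    (hφ₂ : ∀ a ∈ I, HasDerivWithinAt φ₂ (dφ₂ a) I a)
    (hψ₁ : ∀ a ∈ I, HasDerivWithinAt ψ₁ (dψ₁ a) I a)
    (hψ₂ : ∀ a ∈ I, HasDerivWithinAt ψ₂ (dψ₂ a) I a)
    (hcmp : ∀ a ∈ I, ∀ b ∈ I,
      dφ₁ a * dφ₂ b + dφ₁ b * dφ₂ a ≤ dψ₁ a * dψ₂ b + dψ₁ b * dψ₂ a)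
    {a b : ℝ} (ha : a ∈ I) (hb : b ∈ I) :
    (φ₁ a - φ₁ b) * (φ₂ a - φ₂ b) ≤ (ψ₁ a - ψ₁ b) * (ψ₂ a - ψ₂ b) := by
  wlog hba : b ≤ a generalizing a b
  · calc (φ₁ a - φ₁ b) * (φ₂ a - φ₂ b) = (φ₁ b - φ₁ a) * (φ₂ b - φ₂ a) := by ring
      _ ≤ (ψ₁ b - ψ₁ a) * (ψ₂ b - ψ₂ a) := this hb ha (le_of_not_ge hba)
      _ = (ψ₁ a - ψ₁ b) * (ψ₂ a - ψ₂ b) := by ring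
  have key := hI.le_of_hasDerivWithinAt_nonneg (fun x hx =>
    (((hψ₁ x hx).sub_const (ψ₁ b)).mul ((hψ₂ x hx).sub_const (ψ₂ b))).sub
      (((hφ₁ x hx).sub_const (φ₁ b)).mul ((hφ₂ x hx).sub_const (φ₂ b)))) hb ha hba
    (fun x hx => sub_nonneg.2 <| deriv_mul_sub_le_of_le hI hφ₁ hφ₂ hψ₁ hψ₂ hcmp
      (hI.ordConnected.out hb ha (Set.Ioo_subset_Icc_self hx)) hb hx.1.le)
  simpa using key

end Increments

theorem dform_comparison_deriv_general [Fintype Ω] (μ : Ω → ℝ)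
    (hμpos : ∀ ω, 0 < μ ω)
    (L : (Ω → ℝ) →ₗ[ℝ] (Ω → ℝ)) (hL : IsGen μ L)
    (I : Set ℝ) (hIconv : Convex ℝ I)
    (φ₁ φ₂ ψ₁ ψ₂ dφ₁ dφ₂ dψ₁ dψ₂ : ℝ → ℝ)
    (hφ₁ : ∀ a ∈ I, HasDerivWithinAt φ₁ (dφ₁ a) I a)
    (hφ₂ : ∀ a ∈ I, HasDerivWithinAt φ₂ (dφ₂ a) I a)
    (hψ₁ : ∀ a ∈ I, HasDerivWithinAt ψ₁ (dψ₁ a) I a)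
    (hψ₂ : ∀ a ∈ I, HasDerivWithinAt ψ₂ (dψ₂ a) I a)
    (hcmp : ∀ a ∈ I, ∀ b ∈ I,
      dφ₁ a * dφ₂ b + dφ₁ b * dφ₂ a ≤ dψ₁ a * dψ₂ b + dψ₁ b * dψ₂ a)
    (f : Ω → ℝ) (hf : ∀ ω, f ω ∈ I) :
    dform μ L (fun ω => φ₁ (f ω)) (fun ω => φ₂ (f ω)) ≤
      dform μ L (fun ω => ψ₁ (f ω)) (fun ω => ψ₂ (f ω)) :=
  dform_le_dform_of_forall_mul_sub_le (fun ω => (hμpos ω).le) hL fun x y =>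
    mul_sub_le_mul_sub hIconv hφ₁ hφ₂ hψ₁ hψ₂ hcmp (hf x) (hf y)

/-- differential comparison lemma for Dirichlet forms. -/
theorem dform_comparison_deriv [Fintype Ω] (μ : Ω → ℝ)
    (hμpos : ∀ ω, 0 < μ ω) (hμ1 : ∑ ω, μ ω = 1)
    (L : (Ω → ℝ) →ₗ[ℝ] (Ω → ℝ)) (hL : IsGen μ L)
    (I : Set ℝ) (hIconv : Convex ℝ I) (hIne : I.Nonempty)
    (φ₁ φ₂ ψ₁ ψ₂ dφ₁ dφ₂ dψ₁ dψ₂ : ℝ → ℝ)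
    (hφ₁ : ∀ a ∈ I, HasDerivWithinAt φ₁ (dφ₁ a) I a)
    (hφ₂ : ∀ a ∈ I, HasDerivWithinAt φ₂ (dφ₂ a) I a)
    (hψ₁ : ∀ a ∈ I, HasDerivWithinAt ψ₁ (dψ₁ a) I a)
    (hψ₂ : ∀ a ∈ I, HasDerivWithinAt ψ₂ (dψ₂ a) I a)
    (hcmp : ∀ a ∈ I, ∀ b ∈ I,
      dφ₁ a * dφ₂ b + dφ₁ b * dφ₂ a ≤ dψ₁ a * dψ₂ b + dψ₁ b * dψ₂ a)
    (f : Ω → ℝ) (hf : ∀ ω, f ω ∈ I) :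
    dform μ L (fun ω => φ₁ (f ω)) (fun ω => φ₂ (f ω)) ≤
      dform μ L (fun ω => ψ₁ (f ω)) (fun ω => ψ₂ (f ω)) :=
  dform_comparison_deriv_general μ hμpos L hL I hIconv φ₁ φ₂ ψ₁ ψ₂ dφ₁ dφ₂ dψ₁ dψ₂ hφ₁ hφ₂ hψ₁ hψ₂
    hcmp f hf

end
end

section
/- For every f : Ω → (0,∞) one has 𝓔(log f, log f) ≤ −𝓔(f, 1/f). -/
/-!
With `a ω x := (L 1_x)(ω)` the matrix of `L`, the hypotheses on `L` say that the weights
`μ ω * a ω x` are symmetric, have zero row sums and are nonpositive off the diagonal, so that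
`2 𝓔(u, v) = ∑_{ω ≠ x} μ ω (-a ω x) (u ω - u x) (v ω - v x)`. The theorem thus reduces to the
two-point inequality `(log u - log v)² ≤ (u - v) (1/v - 1/u)`; writing `u / v = e^{2s}` this is
`4 s² ≤ 4 sinh² s`.
-/

open Real Finset

noncomputable section

variable {Ω : Type*}

lemma sq_le_sinh_sq (s : ℝ) : s ^ 2 ≤ sinh s ^ 2 := by
  rw [sq_le_sq, abs_sinh]
  exact self_le_sinh_iff.mpr (abs_nonneg s)

lemma sq_sub_le_exp_sub_mul_exp_neg_sub (a b : ℝ) :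
    (a - b) ^ 2 ≤ (exp a - exp b) * (exp (-b) - exp (-a)) := by
  set s := (a - b) / 2
  have ha : a = b + 2 * s := by ring
  have key : (exp a - exp b) * (exp (-b) - exp (-a)) = (2 * sinh s) ^ 2 := by
    rw [ha, sinh_eq]
    simp only [exp_add, exp_neg, two_mul]
    field_simp
    ring
  rw [key, show a - b = 2 * s by ring, mul_pow, mul_pow]
  linarith [sq_le_sinh_sq s]

lemma sq_log_sub_log_le {u v : ℝ} (hu : 0 < u) (hv : 0 < v) :
    (log u - log v) ^ 2 ≤ (u - v) * (v⁻¹ - u⁻¹) := by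
  simpa only [exp_neg, exp_log hu, exp_log hv] using
    sq_sub_le_exp_sub_mul_exp_neg_sub (log u) (log v)

lemma Finset.sum_sum_mul_sub_mul_sub {ι : Type*} [Fintype ι] {q : ι → ι → ℝ}
    (hsymm : ∀ i j, q i j = q j i) (hrow : ∀ i, ∑ j, q i j = 0) (u v : ι → ℝ) :
    ∑ i, ∑ j, q i j * ((u i - u j) * (v i - v j)) = -2 * ∑ i, ∑ j, q i j * (u i * v j) := by
  have hswap : ∑ i, ∑ j, q i j * (u j * (v j - v i)) = ∑ i, ∑ j, q i j * (u i * (v i - v j)) := by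
    rw [Finset.sum_comm]
    exact Finset.sum_congr rfl fun i _ => Finset.sum_congr rfl fun j _ => by rw [hsymm]
  have hdiag : ∑ i, ∑ j, q i j * (u i * v i) = 0 := by
    simp [← Finset.sum_mul, hrow]
  calc ∑ i, ∑ j, q i j * ((u i - u j) * (v i - v j))
      = ∑ i, ∑ j, (q i j * (u i * (v i - v j)) + q i j * (u j * (v j - v i))) := by
        simp only [← mul_add]; congr! 3; ring
    _ = 2 * ∑ i, ∑ j, q i j * (u i * (v i - v j)) := by
        simp only [Finset.sum_add_distrib, hswap]; ring
    _ = -2 * ∑ i, ∑ j, q i j * (u i * v j) := by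
        simp only [mul_sub, Finset.sum_sub_distrib, hdiag]; ring

section Generator

variable [Fintype Ω] {μ : Ω → ℝ} {L : (Ω → ℝ) →ₗ[ℝ] (Ω → ℝ)}

lemma dform_neg_right (u v : Ω → ℝ) :
    dform μ L u (-v) = -dform μ L u v := by
  simp [dform, pexp, ← Finset.sum_neg_distrib]

variable [DecidableEq Ω]

lemma dform_eq_sum_sum (u v : Ω → ℝ) :
    dform μ L u v = ∑ ω, ∑ x, μ ω * LinearMap.toMatrix' L ω x * (u ω * v x) := by
  simp only [dform, pexp, ← LinearMap.toMatrix'_mulVec L v, Matrix.mulVec, dotProduct,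
    Finset.mul_sum]
  exact Finset.sum_congr rfl fun ω _ => Finset.sum_congr rfl fun x _ => by ring

namespace IsGen

lemma sum_toMatrix'_eq_zero (hL : IsGen μ L) (ω : Ω) : ∑ x, LinearMap.toMatrix' L ω x = 0 := by
  have := congrFun hL.1 ω
  rw [← LinearMap.toMatrix'_mulVec] at this
  simpa [Matrix.mulVec, dotProduct] using this

lemma toMatrix'_nonpos (hL : IsGen μ L) {ω x : Ω} (h : ω ≠ x) : LinearMap.toMatrix' L ω x ≤ 0 := by
  have := hL.2.2.2 (-Pi.single x 1) ω fun y => by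
    by_cases hy : y = x <;> simp [hy, h]
  simpa [LinearMap.toMatrix'_apply] using this

lemma mul_toMatrix'_comm (hL : IsGen μ L) (ω x : Ω) :
    μ ω * LinearMap.toMatrix' L ω x = μ x * LinearMap.toMatrix' L x ω := by
  have := hL.2.1 (Pi.single ω 1) (Pi.single x 1)
  simpa [pexp, LinearMap.toMatrix'_apply, Pi.single_apply] using this

lemma two_mul_dform (hL : IsGen μ L) (u v : Ω → ℝ) :
    2 * dform μ L u v =
      -∑ ω, ∑ x, μ ω * LinearMap.toMatrix' L ω x * ((u ω - u x) * (v ω - v x)) := by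
  rw [dform_eq_sum_sum, Finset.sum_sum_mul_sub_mul_sub hL.mul_toMatrix'_comm fun ω => by
    rw [← Finset.mul_sum, hL.sum_toMatrix'_eq_zero, mul_zero]]
  ring

lemma dform_le_dform_of_sub_mul_sub_le (hμ : ∀ ω, 0 ≤ μ ω) (hL : IsGen μ L)
    {u v u' v' : Ω → ℝ}
    (h : ∀ ω x, (u' ω - u' x) * (v' ω - v' x) ≤ (u ω - u x) * (v ω - v x)) :
    dform μ L u' v' ≤ dform μ L u v := by
  suffices 2 * dform μ L u' v' ≤ 2 * dform μ L u v by linarith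
  rw [hL.two_mul_dform, hL.two_mul_dform, neg_le_neg_iff]
  refine Finset.sum_le_sum fun ω _ => Finset.sum_le_sum fun x _ => ?_
  rcases eq_or_ne ω x with rfl | hne
  · simp
  · exact mul_le_mul_of_nonpos_left (h ω x) <|
      mul_nonpos_of_nonneg_of_nonpos (hμ ω) (hL.toMatrix'_nonpos hne)

end IsGen

end Generator

theorem dform_log_le_general [Fintype Ω] (μ : Ω → ℝ)
    (hμpos : ∀ ω, 0 < μ ω)
    (L : (Ω → ℝ) →ₗ[ℝ] (Ω → ℝ)) (hL : IsGen μ L)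
    (f : Ω → ℝ) (hf : ∀ ω, 0 < f ω) :
    dform μ L (fun ω => Real.log (f ω)) (fun ω => Real.log (f ω)) ≤
      -dform μ L f (fun ω => (f ω)⁻¹) := by
  classical
  calc dform μ L (fun ω => log (f ω)) (fun ω => log (f ω))
      ≤ dform μ L f (-fun ω => (f ω)⁻¹) :=
        hL.dform_le_dform_of_sub_mul_sub_le (fun ω => (hμpos ω).le) fun ω x => by
          simpa [← sq, neg_add_eq_sub] using sq_log_sub_log_le (hf ω) (hf x)
    _ = -dform μ L f (fun ω => (f ω)⁻¹) := dform_neg_right f _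

/-- `𝓔(log f, log f) ≤ −𝓔(f, 1/f)`. -/
theorem dform_log_le [Fintype Ω] (μ : Ω → ℝ)
    (hμpos : ∀ ω, 0 < μ ω) (hμ1 : ∑ ω, μ ω = 1)
    (L : (Ω → ℝ) →ₗ[ℝ] (Ω → ℝ)) (hL : IsGen μ L)
    (f : Ω → ℝ) (hf : ∀ ω, 0 < f ω) :
    dform μ L (fun ω => Real.log (f ω)) (fun ω => Real.log (f ω)) ≤
      -dform μ L f (fun ω => (f ω)⁻¹) :=
  dform_log_le_general μ hμpos L hL f hf

end
end

section
/- Let C > 0. The 0-logSob inequality holds with constant C (i.e. Var(log f) ≤ −(C/2) 𝓔(f, 1/f) for every f : Ω → (0,∞)) if and only if the Poincaré inequality holds with constant C/2, i.e. Var(g) ≤ (C/2) 𝓔(g,g) for every g : Ω → ℝ. -/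
open Real Finset

noncomputable section

variable {Ω : Type*}

open Filter Topology

/-! Write `𝓔(f, g) = ½ ∑ c(ω, ω') (f ω - f ω') (g ω - g ω')`, where the conductances `c` are
symmetric and nonnegative off the diagonal (maximum principle). Substituting `f = exp u`, the
`0`-logSob inequality becomes `Var u ≤ (C/2) ∑ c(ω, ω') (cosh (u ω - u ω') - 1)`, whereas Poincaré
is the same inequality with `(u ω - u ω')² / 2` in place of `cosh (u ω - u ω') - 1`. Since
`x² / 2 ≤ cosh x - 1`, Poincaré implies `0`-logSob; conversely, applying `0`-logSob to `ε u` and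
letting `ε → 0` gives Poincaré, because `(cosh (ε x) - 1) / ε² → x² / 2`. -/

namespace Real

lemma cosh_sub_one_eq_two_mul_sinh_sq (x : ℝ) : cosh x - 1 = 2 * sinh (x / 2) ^ 2 := by
  have h := cosh_two_mul (x / 2)
  rw [mul_div_cancel₀ x two_ne_zero, cosh_sq] at h
  linarith

lemma sq_div_two_le_cosh_sub_one (x : ℝ) : x ^ 2 / 2 ≤ cosh x - 1 := by
  have hpartial :
      ∑ n ∈ Finset.range 2, x ^ (2 * n) / ((2 * n).factorial : ℝ) = 1 + x ^ 2 / 2 := by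
    norm_num [Finset.sum_range_succ]
  have h := sum_le_hasSum (Finset.range 2)
    (fun n _ => by rw [pow_mul]; positivity) (hasSum_cosh x)
  rw [hpartial] at h
  linarith

lemma tendsto_cosh_mul_sub_one_div_sq (x : ℝ) :
    Tendsto (fun ε => (cosh (ε * x) - 1) / ε ^ 2) (𝓝[≠] 0) (𝓝 (x ^ 2 / 2)) := by
  have hderiv : HasDerivAt (fun ε => sinh (ε * (x / 2))) (x / 2) 0 := by
    simpa using (hasDerivAt_mul_const (x := (0 : ℝ)) (x / 2)).sinh
  have hslope := ((hasDerivAt_iff_tendsto_slope.mp hderiv).pow 2).const_mul 2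
  rw [show x ^ 2 / 2 = 2 * (x / 2) ^ 2 by ring]
  refine hslope.congr fun ε => ?_
  rw [slope_def_field, cosh_sub_one_eq_two_mul_sinh_sq]
  simp only [zero_mul, sinh_zero, sub_zero]
  ring_nf

lemma exp_sub_exp_mul_inv_sub_inv (a b : ℝ) :
    (exp a - exp b) * ((exp a)⁻¹ - (exp b)⁻¹) = -(2 * (cosh (a - b) - 1)) := by
  rw [cosh_eq, exp_neg, exp_sub]
  field_simp
  ring

end Real

lemma sum_sum_mul_sub_mul_sub_s5 [Fintype Ω] {K : Ω → Ω → ℝ} (hsymm : ∀ ω ω', K ω ω' = K ω' ω)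
    (hrow : ∀ ω, ∑ ω', K ω ω' = 0) (f g : Ω → ℝ) :
    ∑ ω, ∑ ω', K ω ω' * ((f ω - f ω') * (g ω - g ω')) =
      -2 * ∑ ω, ∑ ω', K ω ω' * (f ω * g ω') := by
  have hrow' (h : Ω → ℝ) : ∑ ω, ∑ ω', K ω ω' * h ω = 0 := by
    simp [← Finset.sum_mul, hrow]
  have hcol (h : Ω → ℝ) : ∑ ω, ∑ ω', K ω ω' * h ω' = 0 := by
    rw [Finset.sum_comm]
    simp_rw [hsymm _ (_ : Ω)]
    exact hrow' h
  have hswap : ∑ ω, ∑ ω', K ω ω' * (f ω' * g ω) = ∑ ω, ∑ ω', K ω ω' * (f ω * g ω') := by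
    rw [Finset.sum_comm]
    simp_rw [hsymm _ (_ : Ω)]
  have hexpand : ∀ ω ω', K ω ω' * ((f ω - f ω') * (g ω - g ω')) = K ω ω' * (f ω * g ω)
      - K ω ω' * (f ω * g ω') - K ω ω' * (f ω' * g ω) + K ω ω' * (f ω' * g ω') := by
    intros; ring
  simp only [hexpand, Finset.sum_add_distrib, Finset.sum_sub_distrib]
  rw [hrow' (fun ω => f ω * g ω), hcol (fun ω => f ω * g ω), hswap]
  ring

section Conductance

variable [DecidableEq Ω] {μ : Ω → ℝ} {L : (Ω → ℝ) →ₗ[ℝ] (Ω → ℝ)}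

variable (μ L) in
def conductance (ω ω' : Ω) : ℝ := -(μ ω * L (Pi.single ω' 1) ω)

lemma conductance_nonneg (hμ : ∀ ω, 0 ≤ μ ω)
    (hmax : ∀ (f : Ω → ℝ) (ω : Ω), (∀ x, f x ≤ f ω) → 0 ≤ L f ω) {ω ω' : Ω} (hne : ω ≠ ω') :
    0 ≤ conductance μ L ω ω' := by
  have h := hmax (-Pi.single ω' 1) ω fun x => by
    by_cases hx : x = ω' <;> simp [hx, hne]
  rw [map_neg, Pi.neg_apply, neg_nonneg] at h
  exact neg_nonneg.mpr (mul_nonpos_of_nonneg_of_nonpos (hμ ω) h)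

variable [Fintype Ω]

lemma dform_eq_neg_sum_conductance (f g : Ω → ℝ) :
    dform μ L f g = -∑ ω, ∑ ω', conductance μ L ω ω' * (f ω * g ω') := by
  simp only [dform, pexp, conductance, ← Finset.sum_neg_distrib]
  refine Finset.sum_congr rfl fun ω _ => ?_
  rw [LinearMap.pi_apply_eq_sum_univ L g, Finset.sum_apply, Finset.mul_sum, Finset.mul_sum]
  refine Finset.sum_congr rfl fun ω' _ => ?_
  have : (fun j => if ω' = j then (1 : ℝ) else 0) = Pi.single ω' 1 := by
    ext j; simp [Pi.single_apply, eq_comm]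
  rw [this, Pi.smul_apply, smul_eq_mul]
  ring

lemma sum_conductance_eq_zero (h1 : L (fun _ => 1) = 0) (ω : Ω) :
    ∑ ω', conductance μ L ω ω' = 0 := by
  have hsum : ∑ ω', L (Pi.single ω' 1) ω = 0 := by
    rw [← Finset.sum_apply, ← map_sum, Finset.univ_sum_single (fun _ : Ω => (1 : ℝ)), h1]
    rfl
  simp [conductance, ← Finset.mul_sum, hsum]

lemma conductance_comm (hsymm : ∀ f g, dform μ L f g = dform μ L g f) (ω ω' : Ω) :
    conductance μ L ω ω' = conductance μ L ω' ω := by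
  have h := hsymm (Pi.single ω 1) (Pi.single ω' 1)
  simp only [dform, pexp, Pi.single_apply, ite_mul, one_mul, zero_mul, mul_ite, mul_zero,
    Finset.sum_ite_eq', Finset.mem_univ, if_true] at h
  simp only [conductance, h]

lemma dform_eq_sum_conductance (h1 : L (fun _ => 1) = 0)
    (hsymm : ∀ f g, dform μ L f g = dform μ L g f) (f g : Ω → ℝ) :
    dform μ L f g =
      (∑ ω, ∑ ω', conductance μ L ω ω' * ((f ω - f ω') * (g ω - g ω'))) / 2 := by
  rw [sum_sum_mul_sub_mul_sub_s5 (conductance_comm hsymm) (sum_conductance_eq_zero h1),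
    dform_eq_neg_sum_conductance]
  ring

end Conductance

lemma varE_const_mul [Fintype Ω] (μ : Ω → ℝ) (c : ℝ) (u : Ω → ℝ) :
    varE μ (fun ω => c * u ω) = c ^ 2 * varE μ u := by
  simp only [varE, pexp, mul_pow, mul_left_comm (μ _), ← Finset.mul_sum]
  ring

section EdgeSum

variable [Fintype Ω] [DecidableEq Ω] {μ : Ω → ℝ} {L : (Ω → ℝ) →ₗ[ℝ] (Ω → ℝ)}

variable (μ L) in
def edgeSum (ψ : ℝ → ℝ) (u : Ω → ℝ) : ℝ :=
  ∑ ω, ∑ ω', conductance μ L ω ω' * ψ (u ω - u ω')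

lemma edgeSum_const_mul_apply (ψ : ℝ → ℝ) (c : ℝ) (u : Ω → ℝ) :
    edgeSum μ L ψ (fun ω => c * u ω) = edgeSum μ L (fun x => ψ (c * x)) u := by
  simp only [edgeSum, mul_sub]

lemma edgeSum_div_const (ψ : ℝ → ℝ) (a : ℝ) (u : Ω → ℝ) :
    edgeSum μ L (fun x => ψ x / a) u = edgeSum μ L ψ u / a := by
  simp only [edgeSum, Finset.sum_div, mul_div_assoc]

lemma edgeSum_mono (hμ : ∀ ω, 0 ≤ μ ω)
    (hmax : ∀ (f : Ω → ℝ) (ω : Ω), (∀ x, f x ≤ f ω) → 0 ≤ L f ω) {ψ φ : ℝ → ℝ}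
    (hle : ∀ x, ψ x ≤ φ x) (h0 : ψ 0 = φ 0) (u : Ω → ℝ) :
    edgeSum μ L ψ u ≤ edgeSum μ L φ u := by
  refine Finset.sum_le_sum fun ω _ => Finset.sum_le_sum fun ω' _ => ?_
  rcases eq_or_ne ω ω' with rfl | hne
  · rw [sub_self, h0]
  · exact mul_le_mul_of_nonneg_left (hle _) (conductance_nonneg hμ hmax hne)

lemma tendsto_edgeSum {ι : Type*} {l : Filter ι} {ψ : ι → ℝ → ℝ} {φ : ℝ → ℝ}
    (h : ∀ x, Tendsto (fun i => ψ i x) l (𝓝 (φ x))) (u : Ω → ℝ) :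
    Tendsto (fun i => edgeSum μ L (ψ i) u) l (𝓝 (edgeSum μ L φ u)) :=
  tendsto_finsetSum _ fun _ _ => tendsto_finsetSum _ fun _ _ => (h _).const_mul _

lemma dform_self_eq_edgeSum (h1 : L (fun _ => 1) = 0)
    (hsymm : ∀ f g, dform μ L f g = dform μ L g f) (u : Ω → ℝ) :
    dform μ L u u = edgeSum μ L (fun x => x ^ 2 / 2) u := by
  simp only [dform_eq_sum_conductance h1 hsymm, edgeSum, Finset.sum_div, mul_div_assoc, sq]

lemma neg_dform_exp_eq_edgeSum (h1 : L (fun _ => 1) = 0)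
    (hsymm : ∀ f g, dform μ L f g = dform μ L g f) (u : Ω → ℝ) :
    -dform μ L (fun ω => exp (u ω)) (fun ω => (exp (u ω))⁻¹) =
      edgeSum μ L (fun x => cosh x - 1) u := by
  simp only [dform_eq_sum_conductance h1 hsymm, exp_sub_exp_mul_inv_sub_inv, edgeSum,
    Finset.sum_div, ← Finset.sum_neg_distrib]
  refine Finset.sum_congr rfl fun _ _ => Finset.sum_congr rfl fun _ _ => by ring

lemma logSob_zero_iff (h1 : L (fun _ => 1) = 0)
    (hsymm : ∀ f g, dform μ L f g = dform μ L g f) (C : ℝ) :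
    LogSob μ L 0 C ↔ ∀ u, varE μ u ≤ C / 2 * edgeSum μ L (fun x => cosh x - 1) u := by
  simp only [LogSob, if_pos, ← neg_dform_exp_eq_edgeSum h1 hsymm, mul_neg, ← neg_mul]
  refine ⟨fun h u => ?_, fun h f hf => ?_⟩
  · simpa only [log_exp] using h (fun ω => exp (u ω)) fun ω => exp_pos _
  · simpa only [exp_log (hf _)] using h fun ω => log (f ω)

lemma varE_le_edgeSum_sq_of_forall_varE_le_edgeSum_cosh {K : ℝ}
    (h : ∀ u, varE μ u ≤ K * edgeSum μ L (fun x => cosh x - 1) u) (g : Ω → ℝ) :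
    varE μ g ≤ K * edgeSum μ L (fun x => x ^ 2 / 2) g := by
  have hlim := (tendsto_edgeSum (μ := μ) (L := L) tendsto_cosh_mul_sub_one_div_sq g).const_mul K
  refine ge_of_tendsto hlim (eventually_nhdsWithin_of_forall fun ε (hε : ε ≠ 0) => ?_)
  have hε := h fun ω => ε * g ω
  rw [varE_const_mul, edgeSum_const_mul_apply] at hε
  rw [edgeSum_div_const (fun x => cosh (ε * x) - 1), ← mul_div_assoc, le_div_iff₀ (by positivity)]
  linarith

end EdgeSum

theorem zero_logSob_iff_poincare_general [Fintype Ω] (μ : Ω → ℝ)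
    (hμpos : ∀ ω, 0 < μ ω)
    (L : (Ω → ℝ) →ₗ[ℝ] (Ω → ℝ)) (hL : IsGen μ L)
    (C : ℝ) (hC : 0 < C) :
    LogSob μ L 0 C ↔ ∀ g : Ω → ℝ, varE μ g ≤ C / 2 * dform μ L g g := by
  classical
  obtain ⟨h1, hsymm, -, hmax⟩ := hL
  simp only [logSob_zero_iff h1 hsymm, dform_self_eq_edgeSum h1 hsymm]
  refine ⟨varE_le_edgeSum_sq_of_forall_varE_le_edgeSum_cosh, fun h u => (h u).trans ?_⟩
  gcongr
  exact edgeSum_mono (fun ω => (hμpos ω).le) hmax sq_div_two_le_cosh_sub_one (by simp) u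

/-- `0`-logSob with constant `C` iff Poincaré with constant `C/2`. -/
theorem zero_logSob_iff_poincare [Fintype Ω] (μ : Ω → ℝ)
    (hμpos : ∀ ω, 0 < μ ω) (hμ1 : ∑ ω, μ ω = 1)
    (L : (Ω → ℝ) →ₗ[ℝ] (Ω → ℝ)) (hL : IsGen μ L)
    (C : ℝ) (hC : 0 < C) :
    LogSob μ L 0 C ↔ ∀ g : Ω → ℝ, varE μ g ≤ C / 2 * dform μ L g g :=
  zero_logSob_iff_poincare_general μ hμpos L hL C hC

end
end

section
/- Let p ∈ ℝ \ {1} and C > 0. If the p-logSob inequality holds with constant C, then the p'-logSob inequality also holds with the same constant C, where p' = p/(p−1) for p ≠ 0 and 0' = 0. -/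
open Real Finset

noncomputable section

variable {Ω : Type*}

/-!
Substituting `f = g ^ (p' - 1)` into the `p`-logSob inequality gives the `p'`-logSob inequality
for `g`: since `(p' - 1)(p - 1) = 1` we have `f ^ p = g ^ p'` and `f ^ (p - 1) = g`, the constants
agree because `p'² / (p' - 1) = p² / (p - 1)`, and self-adjointness of `L` swaps the arguments
of the Dirichlet form. For `p = 0` the statement is trivial since `0' = 0`.
-/

section Conjugate

variable {p : ℝ}

lemma conj_sub_one_mul_sub_one (hp : p ≠ 1) : (p / (p - 1) - 1) * (p - 1) = 1 := by
  field_simp [sub_ne_zero.mpr hp]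
  ring

lemma conj_sub_one_mul_self (hp : p ≠ 1) : (p / (p - 1) - 1) * p = p / (p - 1) := by
  field_simp [sub_ne_zero.mpr hp]
  ring

lemma conj_ne_zero (hp0 : p ≠ 0) (hp : p ≠ 1) : p / (p - 1) ≠ 0 :=
  div_ne_zero hp0 (sub_ne_zero.mpr hp)

lemma conj_ne_one (hp : p ≠ 1) : p / (p - 1) ≠ 1 := by
  intro h
  simpa [h] using conj_sub_one_mul_sub_one hp

lemma sq_conj_div_conj_sub_one (hp : p ≠ 1) :
    (p / (p - 1)) ^ 2 / (p / (p - 1) - 1) = p ^ 2 / (p - 1) := by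
  have hp1 : p - 1 ≠ 0 := sub_ne_zero.mpr hp
  have hq1 : p / (p - 1) - 1 ≠ 0 := sub_ne_zero.mpr (conj_ne_one hp)
  field_simp
  ring

end Conjugate

section Dirichlet

variable [Fintype Ω] {μ : Ω → ℝ} {L : (Ω → ℝ) →ₗ[ℝ] (Ω → ℝ)}

lemma IsGen.dform_comm (hL : IsGen μ L) (f g : Ω → ℝ) : dform μ L f g = dform μ L g f :=
  hL.2.1 f g

lemma logSob_iff_of_ne {p C : ℝ} (hp0 : p ≠ 0) (hp1 : p ≠ 1) :
    LogSob μ L p C ↔ ∀ f : Ω → ℝ, (∀ ω, 0 < f ω) →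
      entE μ (fun ω => f ω ^ p) ≤
        C * p ^ 2 / (4 * (p - 1)) * dform μ L (fun ω => f ω ^ (p - 1)) f := by
  rw [LogSob, if_neg hp0, if_neg hp1]

end Dirichlet

theorem logSob_conj_general [Fintype Ω] (μ : Ω → ℝ)
    (L : (Ω → ℝ) →ₗ[ℝ] (Ω → ℝ)) (hL : IsGen μ L)
    (p C : ℝ) (hp : p ≠ 1)
    (h : LogSob μ L p C) : LogSob μ L (hconj p) C := by
  rcases eq_or_ne p 0 with rfl | hp0
  · simpa [hconj] using h
  rw [hconj, if_neg hp0, logSob_iff_of_ne (conj_ne_zero hp0 hp) (conj_ne_one hp)]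
  rw [logSob_iff_of_ne hp0 hp] at h
  intro g hg
  set q := p / (p - 1)
  have hpow : ∀ ω, (g ω ^ (q - 1)) ^ p = g ω ^ q := fun ω => by
    rw [← rpow_mul (hg ω).le, conj_sub_one_mul_self hp]
  have hpow_sub_one : ∀ ω, (g ω ^ (q - 1)) ^ (p - 1) = g ω := fun ω => by
    rw [← rpow_mul (hg ω).le, conj_sub_one_mul_sub_one hp, rpow_one]
  have hconst : C * q ^ 2 / (4 * (q - 1)) = C * p ^ 2 / (4 * (p - 1)) := by
    rw [mul_div_mul_comm, sq_conj_div_conj_sub_one hp, ← mul_div_mul_comm]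
  have key := h (fun ω => g ω ^ (q - 1)) fun ω => rpow_pos_of_pos (hg ω) _
  simp only [hpow, hpow_sub_one] at key
  rwa [hconst, hL.dform_comm]

/-- `p`-logSob implies `p'`-logSob with the same constant. -/
theorem logSob_conj [Fintype Ω] (μ : Ω → ℝ)
    (hμpos : ∀ ω, 0 < μ ω) (hμ1 : ∑ ω, μ ω = 1)
    (L : (Ω → ℝ) →ₗ[ℝ] (Ω → ℝ)) (hL : IsGen μ L)
    (p C : ℝ) (hp : p ≠ 1) (hC : 0 < C)
    (h : LogSob μ L p C) : LogSob μ L (hconj p) C :=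
  logSob_conj_general μ L hL p C hp h

end
end

section
/- Let L = Id − E be the simple generator on (Ω, μ), i.e. (Lf)(ω) = f(ω) − E f. Then for every r ∈ [0,1], L satisfies the r-logSob inequality with constant 4. -/
/-!
For `L = Id − E` the Dirichlet form is the covariance, and
`2 Cov(u, v) = ∑ μ(ω) μ(ω') (u ω − u ω') (v ω − v ω')`, so comparing two such forms reduces to an
inequality for pairs of positive reals. Jensen's inequality `E log g ≤ log E g` gives
`Ent g ≤ Cov(g, log g)`: this is the case `r = 1`, and for `0 < r < 1` it reduces the claim, with
`g = f ^ r`, to comparing `Cov(f ^ r, log f ^ r)` with `Cov(f ^ (r - 1), f)` pairwise. By homogeneity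
one may take the pair `(b e^x, b)` with `x ≥ 0`; with `α = r x`, `β = (1 - r) x` the pairwise
inequality becomes `β (α + β) (e^α - 1) ≤ α (1 - e^{-β}) (e^{α+β} - 1)`, a combination of
`e^β ≥ 1 + β + β²/2`, `e^β + e^{-β} ≥ 2 + β²` and `(2 - α) e^α ≤ 2 + α`.
For `r = 0` the pairwise inequality is `(log a - log b)² ≤ a/b + b/a - 2`.
-/

open Real Finset

noncomputable section

variable {Ω : Type*}

namespace Real

lemma two_add_sq_le_exp_add_exp_neg (x : ℝ) : 2 + x ^ 2 ≤ exp x + exp (-x) := by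
  have hsinh : (x / 2) ^ 2 ≤ sinh (x / 2) ^ 2 := by
    rw [sq_le_sq, abs_sinh]
    exact self_le_sinh_iff.2 (abs_nonneg _)
  have hcosh : exp x + exp (-x) = 2 + 4 * sinh (x / 2) ^ 2 := by
    have h := cosh_two_mul (x / 2)
    rw [mul_div_cancel₀ x two_ne_zero, cosh_eq, cosh_sq] at h
    linarith
  linarith

lemma two_sub_mul_exp_le_two_add {a : ℝ} (ha : 0 ≤ a) : (2 - a) * exp a ≤ 2 + a := by
  have hderiv (x : ℝ) : HasDerivAt (fun x => 2 + x - (2 - x) * exp x)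
      (1 - (1 - x) * exp x) x := by
    refine (((hasDerivAt_id x).const_add 2).fun_sub
      (((hasDerivAt_id x).const_sub 2).fun_mul (hasDerivAt_exp x))).congr_deriv ?_
    simp only [id]
    ring
  have hmono : Monotone fun x => 2 + x - (2 - x) * exp x := by
    refine monotone_of_deriv_nonneg (fun x => (hderiv x).differentiableAt) fun x => ?_
    rw [(hderiv x).deriv, sub_nonneg]
    calc (1 - x) * exp x ≤ exp (-x) * exp x := by
          gcongr; linarith [add_one_le_exp (-x)]
      _ = 1 := by rw [← exp_add, neg_add_cancel, exp_zero]
  simpa using hmono ha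

lemma mul_add_mul_exp_sub_one_le {a b : ℝ} (ha : 0 ≤ a) (hb : 0 ≤ b) :
    b * (a + b) * (exp a - 1) ≤ a * ((1 - exp (-b)) * (exp (a + b) - 1)) := by
  have h1 : 0 ≤ a * (exp a - 1) * (exp b - 1 - b - b ^ 2 / 2) :=
    mul_nonneg (mul_nonneg ha (by linarith [add_one_le_exp a]))
      (by linarith [quadratic_le_exp_of_nonneg hb])
  have h2 : 0 ≤ a * (exp b + exp (-b) - 2 - b ^ 2) :=
    mul_nonneg ha (by linarith [two_add_sq_le_exp_add_exp_neg b])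
  have h3 : 0 ≤ b ^ 2 * ((2 + a) - (2 - a) * exp a) :=
    mul_nonneg (sq_nonneg b) (by linarith [two_sub_mul_exp_le_two_add ha])
  have hbb : exp b * exp (-b) = 1 := by rw [← exp_add, add_neg_cancel, exp_zero]
  rw [exp_add]
  linear_combination h1 + h2 + h3 / 2 + a * exp a * hbb

end Real

lemma exp_pair_nonpos {r x : ℝ} (hr0 : 0 < r) (hr1 : r < 1) (hx : 0 ≤ x) :
    (1 - r) * ((exp (r * x) - 1) * x) + r * ((exp ((r - 1) * x) - 1) * (exp x - 1)) ≤ 0 := by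
  rcases hx.eq_or_lt with rfl | hx
  · simp
  have key := mul_add_mul_exp_sub_one_le (mul_nonneg hr0.le hx.le)
    (mul_nonneg (sub_nonneg.2 hr1.le) hx.le)
  rw [← add_mul, add_sub_cancel, one_mul, ← neg_mul, neg_sub] at key
  refine nonpos_of_mul_nonpos_left ?_ hx
  linear_combination key

lemma rpow_log_pair_nonpos_of_le {r a b : ℝ} (hr0 : 0 < r) (hr1 : r < 1) (hb : 0 < b)
    (hba : b ≤ a) :
    (1 - r) * ((a ^ r - b ^ r) * (log a - log b)) +
      r * ((a ^ (r - 1) - b ^ (r - 1)) * (a - b)) ≤ 0 := by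
  obtain ⟨x, hx, rfl⟩ : ∃ x, 0 ≤ x ∧ a = b * exp x :=
    ⟨log (a / b), log_nonneg ((one_le_div hb).2 hba), by
      rw [exp_log (div_pos (hb.trans_le hba) hb)]
      field_simp⟩
  have hfactor : (1 - r) * (((b * exp x) ^ r - b ^ r) * (log (b * exp x) - log b)) +
      r * (((b * exp x) ^ (r - 1) - b ^ (r - 1)) * (b * exp x - b)) =
      b ^ r * ((1 - r) * ((exp (r * x) - 1) * x) +
        r * ((exp ((r - 1) * x) - 1) * (exp x - 1))) := by
    rw [mul_rpow hb.le (exp_pos x).le, mul_rpow hb.le (exp_pos x).le, ← exp_mul, ← exp_mul,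
      log_mul hb.ne' (exp_pos x).ne', log_exp, rpow_sub_one hb.ne']
    field_simp
    ring
  rw [hfactor]
  exact mul_nonpos_of_nonneg_of_nonpos (by positivity) (exp_pair_nonpos hr0 hr1 hx)

lemma rpow_log_pair_le {r a b : ℝ} (hr0 : 0 < r) (hr1 : r < 1) (ha : 0 < a) (hb : 0 < b) :
    (a ^ r - b ^ r) * (log (a ^ r) - log (b ^ r)) ≤
      r ^ 2 / (r - 1) * ((a ^ (r - 1) - b ^ (r - 1)) * (a - b)) := by
  have hpair : (1 - r) * ((a ^ r - b ^ r) * (log a - log b)) +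
      r * ((a ^ (r - 1) - b ^ (r - 1)) * (a - b)) ≤ 0 := by
    rcases le_total b a with hba | hab
    · exact rpow_log_pair_nonpos_of_le hr0 hr1 hb hba
    · linarith [rpow_log_pair_nonpos_of_le hr0 hr1 ha hab]
  rw [log_rpow ha, log_rpow hb, div_mul_eq_mul_div, le_div_iff_of_neg (by linarith)]
  nlinarith [hpair]

lemma log_sub_log_mul_self_le {a b : ℝ} (ha : 0 < a) (hb : 0 < b) :
    (log a - log b) * (log a - log b) ≤ -2 * ((a - b) * (a⁻¹ - b⁻¹)) := by
  have hcosh : exp (log a - log b) + exp (-(log a - log b)) = 2 - (a - b) * (a⁻¹ - b⁻¹) := by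
    rw [neg_sub, exp_sub, exp_sub, exp_log ha, exp_log hb]
    field_simp
    ring
  nlinarith [two_add_sq_le_exp_add_exp_neg (log a - log b), sq_nonneg (log a - log b)]

section Covariance

variable [Fintype Ω] {μ : Ω → ℝ}

def covE (μ : Ω → ℝ) (u v : Ω → ℝ) : ℝ :=
  pexp μ (fun ω => u ω * v ω) - pexp μ u * pexp μ v

lemma dform_simpleL (u v : Ω → ℝ) : dform μ (simpleL μ) u v = covE μ u v := by
  simp only [dform, simpleL, covE, LinearMap.coe_mk, AddHom.coe_mk, pexp, mul_sub,
    Finset.sum_sub_distrib, Finset.sum_mul]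
  simp only [mul_assoc]

lemma varE_eq_covE (u : Ω → ℝ) : varE μ u = covE μ u u := by
  simp only [varE, covE, sq]

lemma two_mul_covE_eq_sum (hμ1 : ∑ ω, μ ω = 1) (u v : Ω → ℝ) :
    2 * covE μ u v = ∑ ω, ∑ ω', μ ω * μ ω' * ((u ω - u ω') * (v ω - v ω')) := by
  have hexpand (ω ω' : Ω) : μ ω * μ ω' * ((u ω - u ω') * (v ω - v ω')) =
      μ ω * (u ω * v ω) * μ ω' + μ ω * (μ ω' * (u ω' * v ω'))
        - μ ω * u ω * (μ ω' * v ω') - μ ω * v ω * (μ ω' * u ω') := by ring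
  simp only [hexpand, Finset.sum_add_distrib, Finset.sum_sub_distrib, ← Finset.mul_sum,
    ← Finset.sum_mul, hμ1, covE, pexp]
  ring

lemma covE_le_mul_covE (hμpos : ∀ ω, 0 ≤ μ ω) (hμ1 : ∑ ω, μ ω = 1) {c : ℝ} {u v s t : Ω → ℝ}
    (h : ∀ ω ω', (u ω - u ω') * (v ω - v ω') ≤ c * ((s ω - s ω') * (t ω - t ω'))) :
    covE μ u v ≤ c * covE μ s t := by
  have hsum : 2 * covE μ u v ≤ 2 * (c * covE μ s t) := by
    rw [mul_left_comm, two_mul_covE_eq_sum hμ1, two_mul_covE_eq_sum hμ1, Finset.mul_sum]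
    refine Finset.sum_le_sum fun ω _ => ?_
    rw [Finset.mul_sum]
    refine Finset.sum_le_sum fun ω' _ => ?_
    exact (mul_le_mul_of_nonneg_left (h ω ω') (mul_nonneg (hμpos ω) (hμpos ω'))).trans_eq
      (by ring)
  linarith

lemma pexp_log_le_log_pexp (hμpos : ∀ ω, 0 ≤ μ ω) (hμ1 : ∑ ω, μ ω = 1) {g : Ω → ℝ}
    (hg : ∀ ω, 0 < g ω) : pexp μ (fun ω => log (g ω)) ≤ log (pexp μ g) := by
  simpa only [pexp, smul_eq_mul] using strictConcaveOn_log_Ioi.concaveOn.le_map_sum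
    (fun ω _ => hμpos ω) hμ1 (fun ω _ => hg ω)

lemma entE_le_covE_log (hμpos : ∀ ω, 0 ≤ μ ω) (hμ1 : ∑ ω, μ ω = 1) {g : Ω → ℝ}
    (hg : ∀ ω, 0 < g ω) : entE μ g ≤ covE μ g (fun ω => log (g ω)) := by
  have hEg : 0 ≤ pexp μ g := Finset.sum_nonneg fun ω _ => mul_nonneg (hμpos ω) (hg ω).le
  have := mul_le_mul_of_nonneg_left (pexp_log_le_log_pexp hμpos hμ1 hg) hEg
  rw [entE, covE]
  linarith

lemma entE_rpow_le_covE (hμpos : ∀ ω, 0 ≤ μ ω) (hμ1 : ∑ ω, μ ω = 1) {r : ℝ} (hr0 : 0 < r)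
    (hr1 : r < 1) {f : Ω → ℝ} (hf : ∀ ω, 0 < f ω) :
    entE μ (fun ω => f ω ^ r) ≤ r ^ 2 / (r - 1) * covE μ (fun ω => f ω ^ (r - 1)) f :=
  (entE_le_covE_log hμpos hμ1 fun ω => rpow_pos_of_pos (hf ω) r).trans
    (covE_le_mul_covE hμpos hμ1 fun ω ω' => rpow_log_pair_le hr0 hr1 (hf ω) (hf ω'))

end Covariance

/-- the simple generator satisfies the `r`-logSob inequality with
constant `4` for every `r ∈ [0,1]`. -/
theorem simple_r_logSob [Fintype Ω] (μ : Ω → ℝ)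
    (hμpos : ∀ ω, 0 < μ ω) (hμ1 : ∑ ω, μ ω = 1) :
    ∀ r : ℝ, 0 ≤ r → r ≤ 1 → LogSob μ (simpleL μ) r 4 := by
  intro r hr0 hr1
  have hμ : ∀ ω, 0 ≤ μ ω := fun ω => (hμpos ω).le
  unfold LogSob
  split_ifs with h0 h1
  · intro f hf
    rw [dform_simpleL, varE_eq_covE, show -((4 : ℝ) / 2) = -2 by norm_num]
    exact covE_le_mul_covE hμ hμ1 fun ω ω' => log_sub_log_mul_self_le (hf ω) (hf ω')
  · intro f hf
    rw [dform_simpleL, div_self four_ne_zero, one_mul]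
    exact entE_le_covE_log hμ hμ1 hf
  · intro f hf
    rw [dform_simpleL, mul_div_mul_left _ _ four_ne_zero]
    exact entE_rpow_le_covE hμ hμ1 (hr0.lt_of_ne (Ne.symm h0)) (hr1.lt_of_ne h1) hf

end
end

section
/- Let p ∈ ℝ, let n ≥ 1, and for i = 1,…,n let (Ω_i, μ_i) be finite probability spaces with positive atoms and let L_i be generators as in the setup, each satisfying the p-logSob inequality (with respect to (Ω_i, μ_i)) with constant C_i > 0. On the product space (Ω, μ) = (Ω₁×···×Ω_n, μ₁⊗···⊗μ_n), define L by (Lf)(x) = Σ_{i=1}^n (L_i g_{i,x})(x_i), where g_{i,x} : Ω_i → ℝ is the function y ↦ f(x₁,…,x_{i−1}, y, x_{i+1},…,x_n). Then L satisfies the p-logSob inequality on (Ω, μ) with constant C = max(C₁,…,C_n). -/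
open Real Finset

noncomputable section

variable {Ω : Type*}

/-- The tensorized generator on a product space. -/
def tensorL {n : ℕ} (X : Fin n → Type*) [∀ i, Fintype (X i)] [∀ i, DecidableEq (X i)]
    (L : ∀ i, (X i → ℝ) →ₗ[ℝ] (X i → ℝ)) :
    ((∀ i, X i) → ℝ) →ₗ[ℝ] ((∀ i, X i) → ℝ) where
  toFun f := fun x => ∑ i, L i (fun y => f (Function.update x i y)) (x i)
  map_add' f g := by
    funext x
    simp only [Pi.add_apply]
    rw [← Finset.sum_add_distrib]
    refine Finset.sum_congr rfl fun i _ => ?_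
    have h : (fun y => f (Function.update x i y) + g (Function.update x i y)) =
        (fun y => f (Function.update x i y)) + fun y => g (Function.update x i y) := rfl
    rw [h, map_add]
    rfl
  map_smul' c f := by
    funext x
    simp only [Pi.smul_apply, smul_eq_mul, RingHom.id_apply]
    rw [Finset.mul_sum]
    refine Finset.sum_congr rfl fun i _ => ?_
    have h : (fun y => c * f (Function.update x i y)) =
        c • fun y => f (Function.update x i y) := rfl
    rw [h, map_smul]
    rfl

/-!
Both sides of the `p`-logSob inequality tensorize. The Dirichlet form of the product generator
is the average over `x` of the sum of the one-coordinate Dirichlet forms of the slices of `f`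
through `x`. Entropy and variance are subadditive, `Ent F ≤ ∑ᵢ E[Entᵢ F]` and
`Var h ≤ ∑ᵢ E[Varᵢ h]`, by telescoping along the partial averages `Aₖ` that integrate out the
coordinates one at a time. For entropy, each increment `E[F (log Aₖ - log Aₖ₊₁)]` is bounded by the
duality `E[F v] ≤ Ent F` for `E[exp v] ≤ 1`, since the slice of `Aₖ / Aₖ₊₁` has mean one. For
variance, the tower property gives `E[h (Aₖ - Aₖ₊₁)] = E[(Aₖ - Aₖ₊₁)²]`, and since `Aₖ - Aₖ₊₁` is
orthogonal to every function not depending on the `k`-th coordinate, this is at most the mean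
conditional variance in that coordinate. As both sides of each one-coordinate inequality are
nonnegative, the constants may all be raised to their maximum before summing.
-/

open Function

section Expectation

variable [Fintype Ω] {μ : Ω → ℝ}

lemma pexp_mono (hμ : ∀ ω, 0 ≤ μ ω) {f g : Ω → ℝ} (h : ∀ ω, f ω ≤ g ω) :
    pexp μ f ≤ pexp μ g :=
  sum_le_sum fun ω _ => mul_le_mul_of_nonneg_left (h ω) (hμ ω)

lemma pexp_nonneg (hμ : ∀ ω, 0 ≤ μ ω) {f : Ω → ℝ} (hf : ∀ ω, 0 ≤ f ω) : 0 ≤ pexp μ f :=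
  sum_nonneg fun ω _ => mul_nonneg (hμ ω) (hf ω)

lemma pexp_pos (hμ : ∀ ω, 0 < μ ω) (hμ1 : ∑ ω, μ ω = 1) {f : Ω → ℝ}
    (hf : ∀ ω, 0 < f ω) : 0 < pexp μ f := by
  have : Nonempty Ω := by
    by_contra h
    simp [not_nonempty_iff.mp h] at hμ1
  exact sum_pos (fun ω _ => mul_pos (hμ ω) (hf ω)) univ_nonempty

lemma pexp_const (hμ1 : ∑ ω, μ ω = 1) (c : ℝ) : pexp μ (fun _ => c) = c := by
  rw [pexp, ← sum_mul, hμ1, one_mul]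

lemma pexp_const_mul (c : ℝ) (f : Ω → ℝ) : pexp μ (fun ω => c * f ω) = c * pexp μ f := by
  simp only [pexp, mul_sum, mul_left_comm]

lemma pexp_mul_const (f : Ω → ℝ) (c : ℝ) : pexp μ (fun ω => f ω * c) = pexp μ f * c := by
  simp only [pexp, sum_mul, mul_assoc]

lemma pexp_add (f g : Ω → ℝ) : pexp μ (fun ω => f ω + g ω) = pexp μ f + pexp μ g := by
  simp only [pexp, mul_add, sum_add_distrib]

lemma pexp_sub (f g : Ω → ℝ) : pexp μ (fun ω => f ω - g ω) = pexp μ f - pexp μ g := by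
  simp only [pexp, mul_sub, sum_sub_distrib]

lemma pexp_sum {κ : Type*} (s : Finset κ) (f : κ → Ω → ℝ) :
    pexp μ (fun ω => ∑ k ∈ s, f k ω) = ∑ k ∈ s, pexp μ (f k) := by
  simp only [pexp, mul_sum]
  exact sum_comm

lemma pexp_mul_log_sub_log_pexp (F : Ω → ℝ) :
    pexp μ (fun ω => F ω * (log (F ω) - log (pexp μ F))) = entE μ F := by
  rw [entE, ← pexp_mul_const, ← pexp_sub]
  simp only [mul_sub]

lemma pexp_mul_sub_pexp (g : Ω → ℝ) :
    pexp μ (fun ω => g ω * (g ω - pexp μ g)) = varE μ g := by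
  rw [varE, sq (pexp μ g), ← pexp_mul_const, ← pexp_sub]
  simp only [mul_sub, sq]

lemma pexp_sq_sub_pexp (hμ1 : ∑ ω, μ ω = 1) (g : Ω → ℝ) :
    pexp μ (fun ω => (g ω - pexp μ g) ^ 2) = varE μ g := by
  have hcentered : pexp μ (fun ω => pexp μ g * (g ω - pexp μ g)) = 0 := by
    rw [pexp_const_mul, pexp_sub, pexp_const hμ1, sub_self, mul_zero]
  rw [← pexp_mul_sub_pexp, ← sub_zero (pexp μ fun ω => g ω * _), ← hcentered, ← pexp_sub]
  simp only [sq, sub_mul]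

lemma varE_nonneg (hμ : ∀ ω, 0 ≤ μ ω) (hμ1 : ∑ ω, μ ω = 1) (g : Ω → ℝ) : 0 ≤ varE μ g :=
  pexp_sq_sub_pexp hμ1 g ▸ pexp_nonneg hμ fun _ => sq_nonneg _

/-- The Fenchel–Young inequality for `u ↦ u log u`, normalized at the point `m`. -/
lemma mul_le_mul_log_div_sub_add_mul_exp {u m : ℝ} (hu : 0 < u) (hm : 0 < m) (v : ℝ) :
    u * v ≤ u * log (u / m) - u + m * exp v := by
  have h := add_one_le_exp (v - log (u / m))
  rw [exp_sub, exp_log (div_pos hu hm)] at h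
  have h' : u * (v - log (u / m) + 1) ≤ m * exp v := by
    calc u * (v - log (u / m) + 1) ≤ u * (exp v / (u / m)) := by gcongr
      _ = m * exp v := by field_simp
  linarith

/-- The easy half of the Gibbs variational formula for the entropy. -/
lemma pexp_mul_le_entE (hμ : ∀ ω, 0 < μ ω) (hμ1 : ∑ ω, μ ω = 1) {F : Ω → ℝ}
    (hF : ∀ ω, 0 < F ω) {v : Ω → ℝ} (hv : pexp μ (fun ω => exp (v ω)) ≤ 1) :
    pexp μ (fun ω => F ω * v ω) ≤ entE μ F := by
  set m := pexp μ F
  have hm : 0 < m := pexp_pos hμ hμ1 hF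
  calc pexp μ (fun ω => F ω * v ω)
      ≤ pexp μ (fun ω => F ω * log (F ω / m) - F ω + m * exp (v ω)) :=
        pexp_mono (fun ω => (hμ ω).le) fun ω =>
          mul_le_mul_log_div_sub_add_mul_exp (hF ω) hm (v ω)
    _ = entE μ F - m + m * pexp μ (fun ω => exp (v ω)) := by
        rw [pexp_add, pexp_sub, pexp_const_mul, ← pexp_mul_log_sub_log_pexp]
        simp only [log_div (hF _).ne' hm.ne']
        rfl
    _ ≤ entE μ F := by nlinarith

lemma entE_nonneg (hμ : ∀ ω, 0 < μ ω) (hμ1 : ∑ ω, μ ω = 1) {F : Ω → ℝ}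
    (hF : ∀ ω, 0 < F ω) : 0 ≤ entE μ F := by
  simpa [pexp] using pexp_mul_le_entE hμ hμ1 hF (v := fun _ => 0) (by simp [pexp_const hμ1])

end Expectation

section LogSobFunctionals

variable [Fintype Ω]

def logSobEnt (μ : Ω → ℝ) (p : ℝ) (f : Ω → ℝ) : ℝ :=
  if p = 0 then varE μ (fun ω => log (f ω))
  else if p = 1 then entE μ f
  else entE μ (fun ω => f ω ^ p)

def logSobEnergy (μ : Ω → ℝ) (L : (Ω → ℝ) →ₗ[ℝ] (Ω → ℝ)) (p : ℝ) (f : Ω → ℝ) : ℝ :=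
  if p = 0 then -(1 / 2) * dform μ L f (fun ω => (f ω)⁻¹)
  else if p = 1 then 1 / 4 * dform μ L f (fun ω => log (f ω))
  else p ^ 2 / (4 * (p - 1)) * dform μ L (fun ω => f ω ^ (p - 1)) f

lemma logSob_iff {μ : Ω → ℝ} {L : (Ω → ℝ) →ₗ[ℝ] (Ω → ℝ)} {p C : ℝ} :
    LogSob μ L p C ↔ ∀ f : Ω → ℝ, (∀ ω, 0 < f ω) → logSobEnt μ p f ≤ C * logSobEnergy μ L p f := by
  unfold LogSob logSobEnt logSobEnergy
  split_ifs <;> refine forall₂_congr fun f _ => ?_ <;> ring_nf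

lemma logSobEnt_nonneg {μ : Ω → ℝ} (hμ : ∀ ω, 0 < μ ω) (hμ1 : ∑ ω, μ ω = 1) (p : ℝ)
    {f : Ω → ℝ} (hf : ∀ ω, 0 < f ω) : 0 ≤ logSobEnt μ p f := by
  unfold logSobEnt
  split_ifs
  · exact varE_nonneg (fun ω => (hμ ω).le) hμ1 _
  · exact entE_nonneg hμ hμ1 hf
  · exact entE_nonneg hμ hμ1 fun ω => rpow_pos_of_pos (hf ω) p

end LogSobFunctionals

section Product

variable {ι : Type*} {X : ι → Type*} {μ : ∀ i, X i → ℝ}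

section Weight

variable [Fintype ι]

variable (μ) in
def piWeight (x : ∀ i, X i) : ℝ := ∏ i, μ i (x i)

lemma piWeight_pos (hμ : ∀ i t, 0 < μ i t) (x : ∀ i, X i) : 0 < piWeight μ x :=
  prod_pos fun i _ => hμ i (x i)

lemma piWeight_update_mul [DecidableEq ι] (x : ∀ i, X i) (i : ι) (t : X i) :
    piWeight μ (update x i t) * μ i (x i) = piWeight μ x * μ i t := by
  simp only [piWeight, apply_update (fun j => μ j), prod_update_of_mem (mem_univ i),
    ← mul_prod_erase univ (fun j => μ j (x j)) (mem_univ i), sdiff_singleton_eq_erase]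
  ring

end Weight

variable [DecidableEq ι]

def coordSlice (f : (∀ i, X i) → ℝ) (x : ∀ i, X i) (i : ι) : X i → ℝ :=
  fun t => f (update x i t)

lemma coordSlice_update (f : (∀ i, X i) → ℝ) (x : ∀ i, X i) (i : ι) (t : X i) :
    coordSlice f (update x i t) i = coordSlice f x i := by
  funext s
  simp only [coordSlice, update_idem]

lemma DependsOn.update_eq {β : Type*} {f : (∀ i, X i) → β} {s : Set ι} (hf : DependsOn f s)
    {i : ι} (hi : i ∉ s) (x : ∀ i, X i) (t : X i) : f (Function.update x i t) = f x :=
  hf fun _ hj => Function.update_of_ne (ne_of_mem_of_not_mem hj hi) t x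

variable [∀ i, Fintype (X i)]

variable (μ) in
def avgCoord (i : ι) (f : (∀ i, X i) → ℝ) (x : ∀ i, X i) : ℝ := pexp (μ i) (coordSlice f x i)

variable (μ) in
def avgList (l : List ι) (f : (∀ i, X i) → ℝ) : (∀ i, X i) → ℝ := l.foldr (avgCoord μ) f

lemma avgCoord_update (i : ι) (f : (∀ i, X i) → ℝ) (x : ∀ i, X i) (t : X i) :
    avgCoord μ i f (update x i t) = avgCoord μ i f x := by
  rw [avgCoord, coordSlice_update, avgCoord]

lemma avgList_pos (hμ : ∀ i t, 0 < μ i t) (hμ1 : ∀ i, ∑ t, μ i t = 1) (l : List ι)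
    {f : (∀ i, X i) → ℝ} (hf : ∀ x, 0 < f x) (x : ∀ i, X i) : 0 < avgList μ l f x := by
  induction l generalizing x with
  | nil => exact hf x
  | cons i l ih => exact pexp_pos (hμ i) (hμ1 i) fun _ => ih _

lemma DependsOn.avgCoord {f : (∀ i, X i) → ℝ} {s : Set ι} (hf : DependsOn f s) (i : ι) :
    DependsOn (avgCoord μ i f) (s \ {i}) := by
  intro x y hxy
  refine congrArg (pexp (μ i)) (funext fun t => hf fun j hj => ?_)
  rcases eq_or_ne j i with rfl | hji
  · simp only [update_self]
  · simp only [Function.update_of_ne hji]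
    exact hxy j ⟨hj, hji⟩

lemma dependsOn_avgCoord (i : ι) (f : (∀ i, X i) → ℝ) : DependsOn (avgCoord μ i f) {i}ᶜ :=
  ((dependsOn_univ f).avgCoord i).mono (by simp)

lemma dependsOn_avgList (l : List ι) (f : (∀ i, X i) → ℝ) :
    DependsOn (avgList μ l f) {j | j ∉ l} := by
  induction l with
  | nil => exact (dependsOn_univ f).mono (by simp)
  | cons i l ih => exact (ih.avgCoord i).mono fun j => by simp +contextual

variable [Fintype ι]

lemma sum_piWeight (hμ1 : ∀ i, ∑ t, μ i t = 1) : ∑ x, piWeight μ x = 1 := by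
  simp only [piWeight, ← Fintype.prod_sum, hμ1, prod_const_one]

lemma pexp_avgCoord (hμ1 : ∀ i, ∑ t, μ i t = 1) (i : ι) (f : (∀ i, X i) → ℝ) :
    pexp (piWeight μ) (avgCoord μ i f) = pexp (piWeight μ) f := by
  -- `(x, t) ↦ (update x i t, x i)` is an involution exchanging the two weightings
  let σ : (∀ j, X j) × X i → (∀ j, X j) × X i := fun q => (update q.1 i q.2, q.1 i)
  have hσ : Involutive σ := fun q => by simp [σ]
  calc pexp (piWeight μ) (avgCoord μ i f)
      = ∑ q : (∀ j, X j) × X i, piWeight μ q.1 * μ i q.2 * f (update q.1 i q.2) := by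
        simp only [pexp, avgCoord, coordSlice, Fintype.sum_prod_type, mul_sum, mul_assoc]
    _ = ∑ q, piWeight μ (σ q).1 * μ i (σ q).2 * f (σ q).1 :=
        sum_congr rfl fun q _ => by rw [piWeight_update_mul]
    _ = ∑ q : (∀ j, X j) × X i, piWeight μ q.1 * μ i q.2 * f q.1 :=
        Fintype.sum_equiv hσ.toPerm _ _ fun _ => rfl
    _ = pexp (piWeight μ) f := by
        simp only [Fintype.sum_prod_type, mul_right_comm _ (μ i _), ← mul_sum, hμ1, mul_one, pexp]

lemma pexp_mul_avgCoord (hμ1 : ∀ i, ∑ t, μ i t = 1) {i : ι} {k : (∀ i, X i) → ℝ}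
    (hk : DependsOn k {i}ᶜ) (g : (∀ i, X i) → ℝ) :
    pexp (piWeight μ) (fun x => k x * avgCoord μ i g x) =
      pexp (piWeight μ) (fun x => k x * g x) := by
  rw [← pexp_avgCoord hμ1 i (fun x => k x * g x)]
  congr 1
  funext x
  unfold avgCoord coordSlice
  simp only [hk.update_eq (Set.notMem_compl_iff.mpr rfl), pexp_const_mul]

lemma pexp_mul_avgList (hμ1 : ∀ i, ∑ t, μ i t = 1) {l : List ι} {k : (∀ i, X i) → ℝ}
    (hk : DependsOn k {j | j ∉ l}) (g : (∀ i, X i) → ℝ) :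
    pexp (piWeight μ) (fun x => k x * avgList μ l g x) =
      pexp (piWeight μ) (fun x => k x * g x) := by
  induction l with
  | nil => rfl
  | cons i l ih =>
    rw [avgList, List.foldr_cons, pexp_mul_avgCoord hμ1 (hk.mono (by simp))]
    exact ih (hk.mono fun j => by simp +contextual)

lemma avgList_toList_univ (hμ1 : ∀ i, ∑ t, μ i t = 1) (f : (∀ i, X i) → ℝ) (x : ∀ i, X i) :
    avgList μ univ.toList f x = pexp (piWeight μ) f := by
  have hconst := (dependsOn_avgList (μ := μ) univ.toList f).mono (t := ∅) (by simp)
  have htower := pexp_mul_avgList hμ1 ((dependsOn_const (α := X) (1 : ℝ)).mono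
    (Set.empty_subset {j | j ∉ univ.toList})) f
  simp only [one_mul] at htower
  rw [← htower, pexp]
  simp only [hconst.empty _ x, ← sum_mul, sum_piWeight hμ1, one_mul]

end Product

section Subadditivity

variable {ι : Type*} [Fintype ι] [DecidableEq ι] {X : ι → Type*} [∀ i, Fintype (X i)]
  {μ : ∀ i, X i → ℝ}

lemma pexp_mul_log_sub_log_avgCoord_le (hμ : ∀ i t, 0 < μ i t) (hμ1 : ∀ i, ∑ t, μ i t = 1)
    (i : ι) {F a : (∀ i, X i) → ℝ} (hF : ∀ x, 0 < F x) (ha : ∀ x, 0 < a x) :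
    pexp (piWeight μ) (fun x => F x * (log (a x) - log (avgCoord μ i a x))) ≤
      pexp (piWeight μ) (fun x => entE (μ i) (coordSlice F x i)) := by
  rw [← pexp_avgCoord hμ1 i]
  refine pexp_mono (fun x => (piWeight_pos hμ x).le) fun x => ?_
  have hb : 0 < avgCoord μ i a x := pexp_pos (hμ i) (hμ1 i) fun _ => ha _
  -- the slice of `a / avgCoord μ i a` has mean one, so duality applies
  refine le_of_eq_of_le ?_ (pexp_mul_le_entE (hμ i) (hμ1 i) (fun t => hF _)
    (v := fun t => log (a (update x i t)) - log (avgCoord μ i a x)) (le_of_eq ?_))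
  · change pexp (μ i) (fun t => F (update x i t) *
      (log (a (update x i t)) - log (avgCoord μ i a (update x i t)))) = _
    simp only [avgCoord_update]
  · simp only [exp_sub, exp_log (ha _), exp_log hb, div_eq_mul_inv, pexp_mul_const]
    exact mul_inv_cancel₀ hb.ne'

lemma pexp_mul_log_sub_log_avgList_le (hμ : ∀ i t, 0 < μ i t) (hμ1 : ∀ i, ∑ t, μ i t = 1)
    (l : List ι) {F : (∀ i, X i) → ℝ} (hF : ∀ x, 0 < F x) :
    pexp (piWeight μ) (fun x => F x * (log (F x) - log (avgList μ l F x))) ≤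
      (l.map fun i => pexp (piWeight μ) (fun x => entE (μ i) (coordSlice F x i))).sum := by
  induction l with
  | nil => simp [avgList, pexp]
  | cons i l ih =>
    have hsplit : pexp (piWeight μ) (fun x => F x * (log (F x) - log (avgList μ (i :: l) F x))) =
        pexp (piWeight μ) (fun x => F x * (log (F x) - log (avgList μ l F x))) +
          pexp (piWeight μ) (fun x => F x * (log (avgList μ l F x) -
            log (avgCoord μ i (avgList μ l F) x))) := by
      rw [← pexp_add]
      congr 1
      funext x
      simp only [avgList, List.foldr_cons]
      ring
    rw [hsplit, List.map_cons, List.sum_cons, add_comm]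
    exact add_le_add (pexp_mul_log_sub_log_avgCoord_le hμ hμ1 i hF
      (avgList_pos hμ hμ1 l hF)) ih

theorem entE_piWeight_le (hμ : ∀ i t, 0 < μ i t) (hμ1 : ∀ i, ∑ t, μ i t = 1)
    {F : (∀ i, X i) → ℝ} (hF : ∀ x, 0 < F x) :
    entE (piWeight μ) F ≤ ∑ i, pexp (piWeight μ) (fun x => entE (μ i) (coordSlice F x i)) := by
  rw [← pexp_mul_log_sub_log_pexp, ← sum_map_toList]
  simpa only [avgList_toList_univ hμ1] using pexp_mul_log_sub_log_avgList_le hμ hμ1 univ.toList hF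

lemma pexp_sq_sub_avgCoord (hμ1 : ∀ i, ∑ t, μ i t = 1) (i : ι) (g : (∀ i, X i) → ℝ) :
    pexp (piWeight μ) (fun x => (g x - avgCoord μ i g x) ^ 2) =
      pexp (piWeight μ) (fun x => varE (μ i) (coordSlice g x i)) := by
  rw [← pexp_avgCoord hμ1 i]
  congr 1
  funext x
  change pexp (μ i) (fun t => (g (update x i t) - avgCoord μ i g (update x i t)) ^ 2) = _
  simp only [avgCoord_update]
  exact pexp_sq_sub_pexp (hμ1 i) _

lemma pexp_mul_sub_avgCoord (hμ1 : ∀ i, ∑ t, μ i t = 1) {i : ι} {k : (∀ i, X i) → ℝ}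
    (hk : DependsOn k {i}ᶜ) (g : (∀ i, X i) → ℝ) :
    pexp (piWeight μ) (fun x => k x * (g x - avgCoord μ i g x)) = 0 := by
  simp only [mul_sub, pexp_sub, pexp_mul_avgCoord hμ1 hk, sub_self]

lemma pexp_mul_sub_avgCoord_avgList_le (hμ : ∀ i t, 0 < μ i t) (hμ1 : ∀ i, ∑ t, μ i t = 1)
    (l : List ι) (i : ι) (h : (∀ i, X i) → ℝ) :
    pexp (piWeight μ) (fun x => h x * (avgList μ l h x - avgCoord μ i (avgList μ l h) x)) ≤
      pexp (piWeight μ) (fun x => (h x - avgCoord μ i h x) ^ 2) := by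
  set a := avgList μ l h
  set Δ := fun x => a x - avgCoord μ i a x with hΔ_def
  set g := fun x => h x - avgCoord μ i h x
  have ha : DependsOn a {j | j ∉ l} := dependsOn_avgList l h
  have hΔ : DependsOn Δ {j | j ∉ l} := fun x y hxy => by
    simp only [hΔ_def, ha hxy, (ha.avgCoord i).mono Set.sdiff_subset hxy]
  have hΔ_sq : pexp (piWeight μ) (fun x => h x * Δ x) = pexp (piWeight μ) (fun x => Δ x ^ 2) := by
    calc pexp (piWeight μ) (fun x => h x * Δ x)
        = pexp (piWeight μ) (fun x => Δ x * a x) := by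
          simp only [mul_comm (h _)]
          exact (pexp_mul_avgList hμ1 hΔ h).symm
      _ = pexp (piWeight μ) (fun x => Δ x ^ 2 + avgCoord μ i a x * Δ x) := by
          congr 1; funext x; simp only [hΔ_def]; ring
      _ = pexp (piWeight μ) (fun x => Δ x ^ 2) := by
          rw [pexp_add, pexp_mul_sub_avgCoord hμ1 (dependsOn_avgCoord i a), add_zero]
  have hΔ_g : pexp (piWeight μ) (fun x => h x * Δ x) = pexp (piWeight μ) (fun x => g x * Δ x) := by
    rw [← sub_eq_zero, ← pexp_sub, ← pexp_mul_sub_avgCoord hμ1 (dependsOn_avgCoord i h) a]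
    congr 1; funext x; simp only [g, hΔ_def]; ring
  have hamgm : pexp (piWeight μ) (fun x => g x * Δ x) ≤
      (pexp (piWeight μ) (fun x => g x ^ 2) + pexp (piWeight μ) (fun x => Δ x ^ 2)) / 2 := by
    rw [← pexp_add, div_eq_mul_inv, ← pexp_mul_const]
    exact pexp_mono (fun x => (piWeight_pos hμ x).le) fun x => by
      nlinarith [sq_nonneg (g x - Δ x)]
  linarith

lemma pexp_mul_sub_avgList_le (hμ : ∀ i t, 0 < μ i t) (hμ1 : ∀ i, ∑ t, μ i t = 1)
    (l : List ι) (h : (∀ i, X i) → ℝ) :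
    pexp (piWeight μ) (fun x => h x * (h x - avgList μ l h x)) ≤
      (l.map fun i => pexp (piWeight μ) (fun x => varE (μ i) (coordSlice h x i))).sum := by
  induction l with
  | nil => simp [avgList, pexp]
  | cons i l ih =>
    have hsplit : pexp (piWeight μ) (fun x => h x * (h x - avgList μ (i :: l) h x)) =
        pexp (piWeight μ) (fun x => h x * (h x - avgList μ l h x)) +
          pexp (piWeight μ) (fun x => h x * (avgList μ l h x -
            avgCoord μ i (avgList μ l h) x)) := by
      rw [← pexp_add]
      congr 1
      funext x
      simp only [avgList, List.foldr_cons]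
      ring
    rw [hsplit, List.map_cons, List.sum_cons, add_comm, ← pexp_sq_sub_avgCoord hμ1]
    exact add_le_add (pexp_mul_sub_avgCoord_avgList_le hμ hμ1 l i h) ih

/-- The Efron–Stein inequality. -/
theorem varE_piWeight_le (hμ : ∀ i t, 0 < μ i t) (hμ1 : ∀ i, ∑ t, μ i t = 1)
    (h : (∀ i, X i) → ℝ) :
    varE (piWeight μ) h ≤ ∑ i, pexp (piWeight μ) (fun x => varE (μ i) (coordSlice h x i)) := by
  rw [← pexp_mul_sub_pexp, ← sum_map_toList]
  simpa only [avgList_toList_univ hμ1] using pexp_mul_sub_avgList_le hμ hμ1 univ.toList h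

lemma logSobEnt_piWeight_le (hμ : ∀ i t, 0 < μ i t) (hμ1 : ∀ i, ∑ t, μ i t = 1) (p : ℝ)
    {f : (∀ i, X i) → ℝ} (hf : ∀ x, 0 < f x) :
    logSobEnt (piWeight μ) p f ≤
      ∑ i, pexp (piWeight μ) (fun x => logSobEnt (μ i) p (coordSlice f x i)) := by
  unfold logSobEnt
  split_ifs
  · exact varE_piWeight_le hμ hμ1 _
  · exact entE_piWeight_le hμ hμ1 hf
  · exact entE_piWeight_le hμ hμ1 fun x => rpow_pos_of_pos (hf x) p

end Subadditivity

section Tensor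

variable {n : ℕ} {X : Fin n → Type*} [∀ i, Fintype (X i)] [∀ i, DecidableEq (X i)]
  {μ : ∀ i, X i → ℝ}

lemma dform_tensorL (hμ1 : ∀ i, ∑ t, μ i t = 1) (L : ∀ i, (X i → ℝ) →ₗ[ℝ] (X i → ℝ))
    (G f : (∀ i, X i) → ℝ) :
    dform (piWeight μ) (tensorL X L) G f = ∑ i, pexp (piWeight μ)
      (fun x => dform (μ i) (L i) (coordSlice G x i) (coordSlice f x i)) := by
  change pexp _ (fun x => G x * ∑ i, L i (coordSlice f x i) (x i)) = _
  simp only [mul_sum, pexp_sum]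
  refine sum_congr rfl fun i _ => ?_
  rw [← pexp_avgCoord hμ1 i]
  congr 1
  funext x
  change pexp (μ i) (fun t => G (update x i t) *
    L i (coordSlice f (update x i t) i) (update x i t i)) = _
  simp only [coordSlice_update, update_self]
  rfl

lemma logSobEnergy_tensorL (hμ1 : ∀ i, ∑ t, μ i t = 1) (L : ∀ i, (X i → ℝ) →ₗ[ℝ] (X i → ℝ))
    (p : ℝ) (f : (∀ i, X i) → ℝ) :
    logSobEnergy (piWeight μ) (tensorL X L) p f =
      ∑ i, pexp (piWeight μ) (fun x => logSobEnergy (μ i) (L i) p (coordSlice f x i)) := by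
  unfold logSobEnergy
  split_ifs <;> simp only [dform_tensorL hμ1, mul_sum, pexp_const_mul] <;> rfl

end Tensor

theorem logSob_tensor_general {n : ℕ} (hn : 0 < n) (X : Fin n → Type*)
    [∀ i, Fintype (X i)] [∀ i, DecidableEq (X i)]
    (μ : ∀ i, X i → ℝ) (hμpos : ∀ i ω, 0 < μ i ω) (hμ1 : ∀ i, ∑ ω, μ i ω = 1)
    (L : ∀ i, (X i → ℝ) →ₗ[ℝ] (X i → ℝ))
    (p : ℝ) (C : Fin n → ℝ) (hC : ∀ i, 0 < C i)
    (hLS : ∀ i, LogSob (μ i) (L i) p (C i)) :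
    LogSob (fun x : ∀ i, X i => ∏ i, μ i (x i)) (tensorL X L) p
      (Finset.univ.sup' (Finset.univ_nonempty_iff.mpr (Fin.pos_iff_nonempty.mp hn)) C) := by
  set Cmax := univ.sup' _ C
  have hslice : ∀ i x f, (∀ x, 0 < f x) → logSobEnt (μ i) p (coordSlice f x i) ≤
      Cmax * logSobEnergy (μ i) (L i) p (coordSlice f x i) := by
    intro i x f hf
    have hent := logSob_iff.mp (hLS i) (coordSlice f x i) fun _ => hf _
    have henergy : 0 ≤ logSobEnergy (μ i) (L i) p (coordSlice f x i) :=
      nonneg_of_mul_nonneg_right ((logSobEnt_nonneg (hμpos i) (hμ1 i) p fun _ => hf _).trans hent)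
        (hC i)
    exact hent.trans (mul_le_mul_of_nonneg_right (le_sup' C (mem_univ i)) henergy)
  refine logSob_iff.mpr fun f hf => ?_
  calc logSobEnt (piWeight μ) p f
      ≤ ∑ i, pexp (piWeight μ) (fun x => logSobEnt (μ i) p (coordSlice f x i)) :=
        logSobEnt_piWeight_le hμpos hμ1 p hf
    _ ≤ ∑ i, pexp (piWeight μ) (fun x => Cmax * logSobEnergy (μ i) (L i) p (coordSlice f x i)) :=
        sum_le_sum fun i _ =>
          pexp_mono (fun x => (piWeight_pos hμpos x).le) fun x => hslice i x f hf
    _ = Cmax * logSobEnergy (piWeight μ) (tensorL X L) p f := by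
        simp only [logSobEnergy_tensorL hμ1, pexp_const_mul, mul_sum]

/-- tensorization of the `p`-logSob inequality. -/
theorem logSob_tensor {n : ℕ} (hn : 0 < n) (X : Fin n → Type*)
    [∀ i, Fintype (X i)] [∀ i, DecidableEq (X i)]
    (μ : ∀ i, X i → ℝ) (hμpos : ∀ i ω, 0 < μ i ω) (hμ1 : ∀ i, ∑ ω, μ i ω = 1)
    (L : ∀ i, (X i → ℝ) →ₗ[ℝ] (X i → ℝ)) (hL : ∀ i, IsGen (μ i) (L i))
    (p : ℝ) (C : Fin n → ℝ) (hC : ∀ i, 0 < C i)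
    (hLS : ∀ i, LogSob (μ i) (L i) p (C i)) :
    LogSob (fun x : ∀ i, X i => ∏ i, μ i (x i)) (tensorL X L) p
      (Finset.univ.sup' (Finset.univ_nonempty_iff.mpr (Fin.pos_iff_nonempty.mp hn)) C) :=
  logSob_tensor_general hn X μ hμpos hμ1 L p C hC hLS

end
end
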